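/- arXiv:quant-ph/0007123 — 8 statements merged into one kernel-verified Lean document; each statement's English description precedes it below -/
import Mathlib

section
/- The pair {w̃, r} is an orthonormal set, and H w̃ = E[(1 + ℓ/N) w̃ + (√(ℓ(N−ℓ))/N) r] and H r = E[(√(ℓ(N−ℓ))/N) w̃ + (1 − ℓ/N) r]; that is, with respect to the orthonormal basis {w̃, r} of V = span{w̃, r}, H admits the 2×2 matrix representation E [[1 + ℓ/N, √(ℓ(N−ℓ))/N], [√(ℓ(N−ℓ))/N, 1 − ℓ/N]]. -/
open scoped BigOperators
noncomputable section

local notation "⟪" x ", " y "⟫" => @inner ℂ _ _ x y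

/-- `{w̃, r}` is an orthonormal pair and with respect to it `H` acts as the
2×2 matrix `E [[1 + ℓ/N, √(ℓ(N−ℓ))/N], [√(ℓ(N−ℓ))/N, 1 − ℓ/N]]`. -/
theorem matrix_representation_of_H_on_V
    (N ℓ : ℕ) (hN : 2 ≤ N) (hℓ1 : 1 ≤ ℓ) (hℓN : ℓ < N)
    (w : Fin N → EuclideanSpace ℂ (Fin N)) (hw : Orthonormal ℂ w)
    (E : ℝ) (hE : 0 < E)
    (s : EuclideanSpace ℂ (Fin N))
    (hs : s = ((Real.sqrt N : ℂ))⁻¹ • ∑ j : Fin N, w j)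
    (H : EuclideanSpace ℂ (Fin N) →L[ℂ] EuclideanSpace ℂ (Fin N))
    (hH : ∀ u, H u = (E : ℂ) •
      ((∑ j ∈ Finset.univ.filter (fun j : Fin N => (j : ℕ) < ℓ), ⟪w j, u⟫ • w j)
        + ⟪s, u⟫ • s))
    (r : EuclideanSpace ℂ (Fin N))
    (hr : r = ((Real.sqrt (1 - (ℓ : ℝ) / N) : ℂ))⁻¹ •
      (s - ((Real.sqrt N : ℂ))⁻¹ •
        ∑ j ∈ Finset.univ.filter (fun j : Fin N => (j : ℕ) < ℓ), w j))
    (wt : EuclideanSpace ℂ (Fin N))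
    (hwt : wt = ((Real.sqrt ℓ : ℂ))⁻¹ •
      ∑ j ∈ Finset.univ.filter (fun j : Fin N => (j : ℕ) < ℓ), w j) :
    ⟪wt, wt⟫ = 1 ∧ ⟪r, r⟫ = 1 ∧ ⟪wt, r⟫ = 0 ∧
    H wt = E • ((1 + (ℓ : ℝ) / N) • wt + (Real.sqrt ((ℓ : ℝ) * ((N : ℝ) - ℓ)) / N) • r) ∧
    H r = E • ((Real.sqrt ((ℓ : ℝ) * ((N : ℝ) - ℓ)) / N) • wt + (1 - (ℓ : ℝ) / N) • r) := by
  classical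
  have hN0 : (0:ℝ) < N := by positivity
  have hℓ0 : (0:ℝ) < ℓ := by exact_mod_cast hℓ1
  have hNl : (ℓ:ℝ) < N := by exact_mod_cast hℓN
  have hq0 : (0:ℝ) < 1 - (ℓ:ℝ)/N := by
    rw [sub_pos, div_lt_one hN0]; exact hNl
  have hEne : E ≠ 0 := hE.ne'
  have hE0 : ((E:ℝ):ℂ) ≠ 0 := Complex.ofReal_ne_zero.mpr hE.ne'
  have hN0c : ((N:ℕ):ℂ) ≠ 0 := by exact_mod_cast hN0.ne'
  set sn : ℝ := Real.sqrt N with hsn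
  set sa : ℝ := Real.sqrt ℓ with hsa
  set sq : ℝ := Real.sqrt (1 - (ℓ:ℝ)/N) with hsq
  set sm : ℝ := Real.sqrt ((ℓ:ℝ) * ((N:ℝ) - ℓ)) with hsm
  have hsn0 : ((sn:ℂ)) ≠ 0 := Complex.ofReal_ne_zero.mpr (Real.sqrt_pos.mpr hN0).ne'
  have hsa0 : ((sa:ℂ)) ≠ 0 := Complex.ofReal_ne_zero.mpr (Real.sqrt_pos.mpr hℓ0).ne'
  have hsq0 : ((sq:ℂ)) ≠ 0 := Complex.ofReal_ne_zero.mpr (Real.sqrt_pos.mpr hq0).ne'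
  have hsn2 : ((sn:ℂ))^2 = (N:ℂ) := by
    rw [hsn]; push_cast [← Complex.ofReal_pow, Real.sq_sqrt hN0.le]; ring
  have hsa2 : ((sa:ℂ))^2 = (ℓ:ℂ) := by
    rw [hsa]; push_cast [← Complex.ofReal_pow, Real.sq_sqrt hℓ0.le]; ring
  have hsq2 : ((sq:ℂ))^2 * N = (N:ℂ) - ℓ := by
    have : ((sq:ℝ))^2 = 1 - (ℓ:ℝ)/N := Real.sq_sqrt hq0.le
    have h2 : ((sq:ℝ))^2 * N = (N:ℝ) - ℓ := by rw [this]; field_simp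
    calc ((sq:ℂ))^2 * N = (((sq^2 * N : ℝ)):ℂ) := by push_cast; ring
    _ = (N:ℂ) - ℓ := by rw [h2]; push_cast; ring
  have hsmr : sm = sa * sq * sn := by
    rw [hsm, hsa, hsq, hsn,
      show (ℓ:ℝ)*((N:ℝ)-ℓ) = ℓ * ((1 - (ℓ:ℝ)/N) * N) by field_simp,
      Real.sqrt_mul hℓ0.le, Real.sqrt_mul hq0.le, mul_assoc]
  have hsmc : ((sm:ℂ)) = (sa:ℂ) * (sq:ℂ) * (sn:ℂ) := by
    rw [hsmr]; push_cast; ring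
  set F : Finset (Fin N) := Finset.univ.filter (fun j : Fin N => (j : ℕ) < ℓ) with hF
  have hcard : F.card = ℓ := by
    have : F = Finset.Iio (⟨ℓ, hℓN⟩ : Fin N) := by
      ext j; simp [hF, Fin.lt_def]
    rw [this, Fin.card_Iio]
  set W : EuclideanSpace ℂ (Fin N) := ∑ j ∈ F, w j with hWdef
  set T : EuclideanSpace ℂ (Fin N) := ∑ j : Fin N, w j with hTdef
  have hwij : ∀ i j, ⟪w i, w j⟫ = if i = j then 1 else 0 := orthonormal_iff_ite.mp hw
  have hiW : ∀ i, ⟪w i, W⟫ = if i ∈ F then 1 else 0 := by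
    intro i
    rw [hWdef, inner_sum]
    simp [hwij]
  have hiT : ∀ i, ⟪w i, T⟫ = 1 := by
    intro i
    rw [hTdef, inner_sum]
    simp [hwij]
  have hWW : ⟪W, W⟫ = (ℓ:ℂ) := by
    rw [hWdef, sum_inner]
    simp only [← hWdef, hiW]
    rw [Finset.sum_ite_mem, Finset.inter_self, Finset.sum_const, hcard]
    simp
  have hTW : ⟪T, W⟫ = (ℓ:ℂ) := by
    rw [hTdef, sum_inner]
    simp only [← hTdef, hiW]
    rw [Finset.sum_ite_mem, Finset.univ_inter, Finset.sum_const, hcard]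
    simp
  have hTT : ⟪T, T⟫ = (N:ℂ) := by
    rw [hTdef, sum_inner]
    simp only [← hTdef, hiT]
    simp
  have hconj : ∀ x : ℝ, (starRingEnd ℂ) ((x:ℂ))⁻¹ = ((x:ℂ))⁻¹ := by
    intro x; rw [map_inv₀, Complex.conj_ofReal]
  have hsW : ⟪s, W⟫ = ((sn:ℂ))⁻¹ * ℓ := by
    rw [hs, inner_smul_left, hconj, hTW]
  have hss : ⟪s, s⟫ = 1 := by
    rw [hs, inner_smul_left, inner_smul_right, hconj, hTT]
    field_simp
    linear_combination (-1:ℂ) * hsn2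
  have his : ∀ i, ⟪w i, s⟫ = ((sn:ℂ))⁻¹ := by
    intro i
    rw [hs, inner_smul_right, hiT, mul_one]
  -- fold wt and r
  have hwt' : wt = ((sa:ℂ))⁻¹ • W := by rw [hwt]
  have hr' : r = ((sq:ℂ))⁻¹ • (s - ((sn:ℂ))⁻¹ • W) := by rw [hr]
  have hWs : ⟪W, s⟫ = ((sn:ℂ))⁻¹ * ℓ := by
    rw [hWdef, sum_inner]
    simp only [← hWdef, his]
    rw [Finset.sum_const, hcard]
    simp [mul_comm]
  -- the five goals
  have g1 : ⟪wt, wt⟫ = 1 := by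
    rw [hwt', inner_smul_left, inner_smul_right, hconj, hWW]
    field_simp
    linear_combination (-1:ℂ) * hsa2
  have g2 : ⟪r, r⟫ = 1 := by
    rw [hr', inner_smul_left, inner_smul_right, hconj,
      inner_sub_left, inner_sub_right, inner_sub_right,
      inner_smul_left, inner_smul_right, inner_smul_left, inner_smul_right,
      hconj, hss, hsW, hWs, hWW]
    field_simp
    linear_combination ((1:ℂ)-↑sq^2) * hsn2 - hsq2
  have g3 : ⟪wt, r⟫ = 0 := by
    rw [hwt', hr', inner_smul_left, inner_smul_right, hconj,
      inner_sub_right, inner_smul_right, hWs, hWW]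
    ring
  have hHwt : H wt = (E:ℂ) • (((sa:ℂ))⁻¹ • W + (((sa:ℂ))⁻¹ * (((sn:ℂ))⁻¹ * ℓ)) • s) := by
    rw [hH wt]
    congr 1
    congr 1
    · rw [hWdef, Finset.smul_sum]
      apply Finset.sum_congr rfl
      intro j hj
      rw [hwt', inner_smul_right, hiW, if_pos hj, mul_one]
    · rw [hwt', inner_smul_right, hsW]
  have hHr : H r = (E:ℂ) • ((((sq:ℂ))⁻¹ * (1 - ((sn:ℂ))⁻¹ * (((sn:ℂ))⁻¹ * ℓ))) • s) := by
    rw [hH r]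
    have hz : ∀ j ∈ F, ⟪w j, r⟫ • w j = (0:ℂ) • w j := by
      intro j hj
      rw [hr', inner_smul_right, inner_sub_right, inner_smul_right, his, hiW, if_pos hj]
      ring_nf
    rw [Finset.sum_congr rfl hz]
    simp only [zero_smul, Finset.sum_const_zero, zero_add]
    congr 1
    rw [hr', inner_smul_right, inner_sub_right, inner_smul_right, hss, hsW]
  refine ⟨g1, g2, g3, ?_, ?_⟩
  · rw [hHwt, hwt', hr']
    match_scalars
    · -- coefficient of W
      field_simp
      ring_nf
      linear_combination (↑E*↑sa:ℂ) * hsmc + (↑E*↑sq*↑sn:ℂ) * hsa2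
    · field_simp
      linear_combination (-(↑E*↑sa*↑sn):ℂ) * hsmc - (↑E*↑sq*↑sn^2:ℂ) * hsa2 - (↑E*↑ℓ*↑sq:ℂ) * hsn2
  · rw [hHr, hwt', hr']
    match_scalars
    · field_simp
      linear_combination (↑E*↑ℓ:ℂ) * hsn2
    · field_simp
      linear_combination (-(↑E*↑sq*↑sn):ℂ) * hsmc - (↑E*↑sa*↑sq^2:ℂ) * hsn2 - (↑E*↑sa:ℂ) * hsq2
end
end

section
/- Let y ∈ ℝ with 0 ≤ y ≤ 1, E > 0 and t ∈ ℝ, and let A be the 2×2 complex matrix A = E [[1 + y², y√(1 − y²)], [y√(1 − y²), 1 − y²]]. Then the matrix exponential satisfies exp(−itA) = e^{−iEt} [[cos(Eyt) − i y sin(Eyt), −i √(1 − y²) sin(Eyt)], [−i √(1 − y²) sin(Eyt), cos(Eyt) + i y sin(Eyt)]]. -/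
/-!
With `s = √(1 - y²)` and the reflection `N = [[y, s], [s, -y]]` we have `A = E (1 + y N)` and
`N² = 1`. Hence `-itA = -iEt + Eyt J` with `J = -iN`, a sum of commuting terms with `J² = -1`,
and splitting the exponential series of `θ J` into even and odd powers gives Euler's formula
`exp (θ J) = cos θ + sin θ J`.
-/

attribute [local instance] Matrix.linftyOpNormedRing Matrix.linftyOpNormedAlgebra

open NormedSpace

section ComplexStructure

variable {𝔸 : Type*} [NormedRing 𝔸] [NormedAlgebra ℂ 𝔸]

theorem exp_smul_of_mul_self_eq_neg_one {J : 𝔸} (hJ : J * J = -1) (z : ℂ) :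
    exp (z • J) = Complex.cos z • (1 : 𝔸) + Complex.sin z • J := by
  have even_pow (n : ℕ) : (z • J) ^ (2 * n) = ((-1) ^ n * z ^ (2 * n)) • (1 : 𝔸) := by
    rw [smul_pow, pow_mul J, sq, hJ, mul_smul, ← neg_one_smul ℂ (1 : 𝔸), smul_pow, one_pow,
      smul_comm]
  have odd_pow (n : ℕ) : (z • J) ^ (2 * n + 1) = ((-1) ^ n * z ^ (2 * n + 1)) • J := by
    rw [pow_succ, even_pow, smul_mul_smul_comm, one_mul, mul_assoc, ← pow_succ]
  rw [exp_eq_tsum ℂ]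
  refine HasSum.tsum_eq (HasSum.even_add_odd ?_ ?_)
  · convert (Complex.hasSum_cos z).smul_const (1 : 𝔸) using 2 with n
    rw [even_pow, smul_smul, inv_mul_eq_div, mul_comm]
  · convert (Complex.hasSum_sin z).smul_const J using 2 with n
    rw [odd_pow, smul_smul, inv_mul_eq_div, mul_comm]

variable [NormedAlgebra ℚ 𝔸] [CompleteSpace 𝔸]

theorem exp_algebraMap_add (a : ℂ) (x : 𝔸) :
    exp (algebraMap ℂ 𝔸 a + x) = Complex.exp a • exp x := by
  rw [exp_add_of_commute (Algebra.commutes a x), ← algebraMap_exp_comm, Algebra.smul_def,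
    Complex.exp_eq_exp_ℂ]

end ComplexStructure

theorem reflection_mul_self {R : Type*} [CommRing R] {c s : R} (h : c ^ 2 + s ^ 2 = 1) :
    !![c, s; s, -c] * !![c, s; s, -c] = 1 := by
  rw [Matrix.mul_fin_two, Matrix.one_fin_two, ← h]
  simp only [mul_neg, neg_mul, neg_neg, mul_comm s c, add_neg_cancel, sq, add_comm (s * s)]

theorem exp_of_two_by_two_hamiltonian_general
    (y E t : ℝ) (hy0 : 0 ≤ y) (hy1 : y ≤ 1)
    (A : Matrix (Fin 2) (Fin 2) ℂ)
    (hA : A = (E : ℂ) • !![1 + (y : ℂ) ^ 2, (y : ℂ) * (Real.sqrt (1 - y ^ 2) : ℂ);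
                          (y : ℂ) * (Real.sqrt (1 - y ^ 2) : ℂ), 1 - (y : ℂ) ^ 2]) :
    NormedSpace.exp ((-(Complex.I * (t : ℂ))) • A) =
      Complex.exp (-(Complex.I * (E : ℂ) * (t : ℂ))) •
        !![(Real.cos (E * y * t) : ℂ) - Complex.I * (y : ℂ) * (Real.sin (E * y * t) : ℂ),
             -Complex.I * (Real.sqrt (1 - y ^ 2) : ℂ) * (Real.sin (E * y * t) : ℂ);
           -Complex.I * (Real.sqrt (1 - y ^ 2) : ℂ) * (Real.sin (E * y * t) : ℂ),
             (Real.cos (E * y * t) : ℂ) + Complex.I * (y : ℂ) * (Real.sin (E * y * t) : ℂ)] := by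
  set s := Real.sqrt (1 - y ^ 2)
  have hs : (y : ℂ) ^ 2 + (s : ℂ) ^ 2 = 1 := by
    have : s ^ 2 = 1 - y ^ 2 := Real.sq_sqrt (by nlinarith)
    exact_mod_cast (by linarith : y ^ 2 + s ^ 2 = 1)
  set N : Matrix (Fin 2) (Fin 2) ℂ := !![(y : ℂ), s; s, -y]
  have hJ : (-Complex.I) • N * (-Complex.I) • N = -1 := by
    rw [smul_mul_smul_comm, reflection_mul_self hs, neg_mul_neg, Complex.I_mul_I, neg_one_smul]
  have decomp : (-(Complex.I * t)) • A =
      algebraMap ℂ _ (-(Complex.I * E * t)) + ((E * y * t : ℝ) : ℂ) • ((-Complex.I) • N) := by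
    rw [hA, Algebra.algebraMap_eq_smul_one]
    ext i j
    fin_cases i <;> fin_cases j <;> simp [N] <;> ring
  rw [decomp]
  refine (exp_algebraMap_add _ _).trans ?_
  rw [exp_smul_of_mul_self_eq_neg_one hJ, Complex.ofReal_cos, Complex.ofReal_sin]
  congr 1
  ext i j
  fin_cases i <;> fin_cases j <;> simp [N] <;> ring

/-- explicit formula for the exponential of the 2×2 Hamiltonian matrix
`A = E [[1 + y², y√(1−y²)], [y√(1−y²), 1 − y²]]`. -/
theorem exp_of_two_by_two_hamiltonian
    (y E t : ℝ) (hy0 : 0 ≤ y) (hy1 : y ≤ 1) (hE : 0 < E)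
    (A : Matrix (Fin 2) (Fin 2) ℂ)
    (hA : A = (E : ℂ) • !![1 + (y : ℂ) ^ 2, (y : ℂ) * (Real.sqrt (1 - y ^ 2) : ℂ);
                          (y : ℂ) * (Real.sqrt (1 - y ^ 2) : ℂ), 1 - (y : ℂ) ^ 2]) :
    NormedSpace.exp ((-(Complex.I * (t : ℂ))) • A) =
      Complex.exp (-(Complex.I * (E : ℂ) * (t : ℂ))) •
        !![(Real.cos (E * y * t) : ℂ) - Complex.I * (y : ℂ) * (Real.sin (E * y * t) : ℂ),
             -Complex.I * (Real.sqrt (1 - y ^ 2) : ℂ) * (Real.sin (E * y * t) : ℂ);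
           -Complex.I * (Real.sqrt (1 - y ^ 2) : ℂ) * (Real.sin (E * y * t) : ℂ),
             (Real.cos (E * y * t) : ℂ) + Complex.I * (y : ℂ) * (Real.sin (E * y * t) : ℂ)] :=
  exp_of_two_by_two_hamiltonian_general y E t hy0 hy1 A hA
end

section
/- For every t ≥ 0, the solution ψ(t) = exp(−itH) s of the Schrödinger equation i dψ/dt = Hψ with ψ(0) = s is given explicitly by ψ(t) = e^{−iEt} { [y cos(Eyt) − i sin(Eyt)] w̃ + √(1 − y²) cos(Eyt) r }, where y = √(ℓ/N). -/
open scoped BigOperators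
noncomputable section

local notation "⟪" x ", " y "⟫" => @inner ℂ _ _ x y

/-!
Since `⟪s, w̃⟫ = y`, `⟪s, s⟫ = 1` and the projection onto `L` maps `s` to `y w̃`, the plane
spanned by `w̃` and `s` is invariant: `H w̃ = E w̃ + E y s` and `H s = E y w̃ + E s`. So `s ± w̃`
are eigenvectors of `H` with eigenvalues `E (1 ± y)`, and expanding `s = ((s + w̃) + (s - w̃)) / 2`
gives `exp(-itH) s = e^{-iEt} (cos(Eyt) s - i sin(Eyt) w̃)`. Substituting `s = y w̃ + √(1 - y²) r`
yields the formula.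
-/

namespace NormedSpace

theorem exp_apply_of_apply_eq_smul {𝕂 F : Type*} [RCLike 𝕂] [NormedAddCommGroup F]
    [NormedSpace 𝕂 F] [CompleteSpace F] {A : F →L[𝕂] F} {v : F} {μ : 𝕂}
    (h : A v = μ • v) : exp A v = exp μ • v := by
  have hpow (n : ℕ) : (A ^ n) v = μ ^ n • v := by
    induction n with
    | zero => simp
    | succ n ih => rw [pow_succ', mul_apply_eq_comp, ih, map_smul, h, smul_smul, pow_succ]
  calc exp A v = ∑' n : ℕ, (((n.factorial : 𝕂))⁻¹ • A ^ n) v := by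
        rw [exp_eq_tsum 𝕂]
        exact (ContinuousLinearMap.apply 𝕂 F v).map_tsum (expSeries_summable' A)
    _ = ∑' n : ℕ, (((n.factorial : 𝕂))⁻¹ • μ ^ n) • v := by
        simp only [smul_apply, hpow, smul_smul, smul_eq_mul]
    _ = exp μ • v := by rw [(expSeries_summable' μ).tsum_smul_const, exp_eq_tsum 𝕂]

variable {F : Type*} [NormedAddCommGroup F] [NormedSpace ℂ F] [CompleteSpace F]

open Complex (I cos sin cosh sinh)

theorem exp_apply_eq_cosh_smul_add_sinh_smul {A : F →L[ℂ] F} {u s : F} {a b : ℂ}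
    (hu : A u = a • u + b • s) (hs : A s = b • u + a • s) :
    exp A s = Complex.exp a • (cosh b • s + sinh b • u) := by
  have hplus : A (s + u) = (a + b) • (s + u) := by rw [map_add, hu, hs]; module
  have hminus : A (s - u) = (a - b) • (s - u) := by rw [map_sub, hu, hs]; module
  calc exp A s = exp A ((2⁻¹ : ℂ) • (s + u) + (2⁻¹ : ℂ) • (s - u)) := by
        congr 1; module
    _ = (2⁻¹ * Complex.exp (a + b)) • (s + u) + (2⁻¹ * Complex.exp (a - b)) • (s - u) := by
        rw [map_add, map_smul, map_smul, exp_apply_of_apply_eq_smul hplus,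
          exp_apply_of_apply_eq_smul hminus, ← Complex.exp_eq_exp_ℂ, smul_smul, smul_smul]
    _ = Complex.exp a • (cosh b • s + sinh b • u) := by
        rw [Complex.cosh, Complex.sinh, Complex.exp_add, Complex.exp_sub, Complex.exp_neg]
        match_scalars
        · field_simp
        · field_simp; ring

theorem exp_neg_I_mul_smul_apply {H : F →L[ℂ] F} {u s : F} {a b : ℂ}
    (hu : H u = a • u + b • s) (hs : H s = b • u + a • s) (t : ℝ) :
    exp ((-(I * t)) • H) s =
      Complex.exp (-(I * a * t)) • (cos (b * t) • s - (I * sin (b * t)) • u) := by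
  have hu' : ((-(I * t)) • H) u = (-(I * t) * a) • u + (-(I * t) * b) • s := by
    rw [smul_apply, hu]; module
  have hs' : ((-(I * t)) • H) s = (-(I * t) * b) • u + (-(I * t) * a) • s := by
    rw [smul_apply, hs]; module
  have hexp : -(I * t) * a = -(I * a * t) := by ring
  have hrot : -(I * t) * b = -(b * t) * I := by ring
  rw [exp_apply_eq_cosh_smul_add_sinh_smul hu' hs', hexp, hrot, Complex.cosh_mul_I,
    Complex.sinh_mul_I, Complex.cos_neg, Complex.sin_neg]
  match_scalars <;> ring

end NormedSpace

section

open Finset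

variable {𝕜 F ι : Type*} [RCLike 𝕜] [SeminormedAddCommGroup F] [InnerProductSpace 𝕜 F]
  {w : ι → F} {K L : Finset ι}

theorem Orthonormal.inner_sum_of_mem (hw : Orthonormal 𝕜 w) {i : ι} (hi : i ∈ K) :
    inner 𝕜 (w i) (∑ k ∈ K, w k) = 1 := by
  simpa using hw.inner_right_sum (fun _ => (1 : 𝕜)) hi

theorem Orthonormal.sum_inner_smul_sum_of_subset (hw : Orthonormal 𝕜 w) (hLK : L ⊆ K)
    (c : 𝕜) :
    ∑ j ∈ L, inner 𝕜 (w j) (c • ∑ k ∈ K, w k) • w j = c • ∑ j ∈ L, w j := by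
  refine (sum_congr rfl fun j hj => ?_).trans smul_sum.symm
  rw [inner_smul_right, hw.inner_sum_of_mem (hLK hj), mul_one]

theorem Orthonormal.inner_sum_sum_of_subset (hw : Orthonormal 𝕜 w) (hLK : L ⊆ K) :
    inner 𝕜 (∑ k ∈ K, w k) (∑ j ∈ L, w j) = (#L : 𝕜) := by
  have hterm (j : ι) (hj : j ∈ L) : inner 𝕜 (∑ k ∈ K, w k) (w j) = 1 := by
    rw [← inner_conj_symm, hw.inner_sum_of_mem (hLK hj), map_one]
  rw [inner_sum, sum_congr rfl hterm]
  simp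

variable (𝕜) in
def normalizedSum (w : ι → F) (K : Finset ι) : F :=
  ((√(#K : ℝ) : ℝ) : 𝕜)⁻¹ • ∑ k ∈ K, w k

theorem inv_sqrt_card_smul_sum_eq_smul_normalizedSum (hL : L.Nonempty) (K : Finset ι) :
    ((√(#K : ℝ) : ℝ) : 𝕜)⁻¹ • ∑ j ∈ L, w j =
      ((√(#L / #K : ℝ) : ℝ) : 𝕜) • normalizedSum 𝕜 w L := by
  have hl : (0 : ℝ) < #L := by exact_mod_cast card_pos.2 hL
  have hscalar : (√(#K : ℝ))⁻¹ = √(#L / #K : ℝ) * (√(#L : ℝ))⁻¹ := by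
    rw [Real.sqrt_div hl.le]
    field_simp [(Real.sqrt_pos.2 hl).ne']
  rw [normalizedSum, smul_smul, ← RCLike.ofReal_inv, ← RCLike.ofReal_inv, ← RCLike.ofReal_mul,
    ← hscalar]

theorem Orthonormal.inner_normalizedSum_of_subset (hw : Orthonormal 𝕜 w) (hLK : L ⊆ K) :
    inner 𝕜 (normalizedSum 𝕜 w K) (normalizedSum 𝕜 w L) =
      ((√(#L / #K : ℝ) : ℝ) : 𝕜) := by
  have hscalar : (√(#K : ℝ))⁻¹ * ((√(#L : ℝ))⁻¹ * #L) = √(#L / #K : ℝ) := by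
    rw [Real.sqrt_div (Nat.cast_nonneg _), inv_mul_eq_div (√(#L : ℝ)), Real.div_sqrt,
      div_eq_inv_mul]
  rw [normalizedSum, normalizedSum, inner_smul_left, inner_smul_right,
    hw.inner_sum_sum_of_subset hLK, map_inv₀, RCLike.conj_ofReal, ← hscalar]
  push_cast
  rfl

theorem Orthonormal.sum_inner_smul_normalizedSum_of_subset (hw : Orthonormal 𝕜 w) (hLK : L ⊆ K)
    (hL : L.Nonempty) :
    ∑ j ∈ L, inner 𝕜 (w j) (normalizedSum 𝕜 w K) • w j =
      ((√(#L / #K : ℝ) : ℝ) : 𝕜) • normalizedSum 𝕜 w L := by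
  rw [normalizedSum, hw.sum_inner_smul_sum_of_subset hLK,
    inv_sqrt_card_smul_sum_eq_smul_normalizedSum hL]

theorem Orthonormal.apply_normalizedSum_of_forall_apply_eq (hw : Orthonormal 𝕜 w) (hLK : L ⊆ K)
    (hL : L.Nonempty) {H : F → F} {c : 𝕜}
    (hH : ∀ u, H u = c • (∑ j ∈ L, inner 𝕜 (w j) u • w j +
      inner 𝕜 (normalizedSum 𝕜 w K) u • normalizedSum 𝕜 w K)) :
    H (normalizedSum 𝕜 w L) =
        c • normalizedSum 𝕜 w L + (c * ((√(#L / #K : ℝ) : ℝ) : 𝕜)) • normalizedSum 𝕜 w K ∧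
      H (normalizedSum 𝕜 w K) =
        (c * ((√(#L / #K : ℝ) : ℝ) : 𝕜)) • normalizedSum 𝕜 w L + c • normalizedSum 𝕜 w K := by
  have hone (M : Finset ι) (hM : M.Nonempty) : ((√(#M / #M : ℝ) : ℝ) : 𝕜) = 1 := by
    rw [div_self (by exact_mod_cast hM.card_pos.ne'), Real.sqrt_one, RCLike.ofReal_one]
  constructor
  · rw [hH, hw.sum_inner_smul_normalizedSum_of_subset subset_rfl hL, hone L hL, one_smul,
      hw.inner_normalizedSum_of_subset hLK]
    module
  · rw [hH, hw.sum_inner_smul_normalizedSum_of_subset hLK hL,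
      hw.inner_normalizedSum_of_subset subset_rfl, hone K (hL.mono hLK), one_smul]
    module

end

theorem explicit_solution_of_schrodinger_evolution_general
    (N ℓ : ℕ) (hℓ1 : 1 ≤ ℓ) (hℓN : ℓ < N)
    (w : Fin N → EuclideanSpace ℂ (Fin N)) (hw : Orthonormal ℂ w)
    (E : ℝ)
    (s : EuclideanSpace ℂ (Fin N))
    (hs : s = ((Real.sqrt N : ℂ))⁻¹ • ∑ j : Fin N, w j)
    (H : EuclideanSpace ℂ (Fin N) →L[ℂ] EuclideanSpace ℂ (Fin N))
    (hH : ∀ u, H u = (E : ℂ) •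
      ((∑ j ∈ Finset.univ.filter (fun j : Fin N => (j : ℕ) < ℓ), ⟪w j, u⟫ • w j)
        + ⟪s, u⟫ • s))
    (r : EuclideanSpace ℂ (Fin N))
    (hr : r = ((Real.sqrt (1 - (ℓ : ℝ) / N) : ℂ))⁻¹ •
      (s - ((Real.sqrt N : ℂ))⁻¹ •
        ∑ j ∈ Finset.univ.filter (fun j : Fin N => (j : ℕ) < ℓ), w j))
    (wt : EuclideanSpace ℂ (Fin N))
    (hwt : wt = ((Real.sqrt ℓ : ℂ))⁻¹ •
      ∑ j ∈ Finset.univ.filter (fun j : Fin N => (j : ℕ) < ℓ), w j)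
    (y : ℝ) (hy : y = Real.sqrt ((ℓ : ℝ) / N)) :
    ∀ t : ℝ, 0 ≤ t →
      NormedSpace.exp ((-(Complex.I * (t : ℂ))) • H) s =
        Complex.exp (-(Complex.I * (E : ℂ) * (t : ℂ))) •
          (((y : ℂ) * (Real.cos (E * y * t) : ℂ)
              - Complex.I * (Real.sin (E * y * t) : ℂ)) • wt
            + ((Real.sqrt (1 - y ^ 2) : ℂ) * (Real.cos (E * y * t) : ℂ)) • r) := by
  intro t _
  set L := Finset.univ.filter (fun j : Fin N => (j : ℕ) < ℓ)
  have hL : L.card = ℓ := by simp [L, Fin.card_filter_val_lt, hℓN.le]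
  have hLne : L.Nonempty := Finset.card_pos.1 (hL ▸ hℓ1)
  have hs' : s = normalizedSum ℂ w Finset.univ := by
    rw [hs, normalizedSum, Finset.card_univ, Fintype.card_fin]; rfl
  have hwt' : wt = normalizedSum ℂ w L := by rw [hwt, normalizedSum, hL]; rfl
  have hy' : y = √(L.card / (Finset.univ : Finset (Fin N)).card : ℝ) := by
    rw [hy, hL, Finset.card_univ, Fintype.card_fin]
  have hSL : ((√N : ℝ) : ℂ)⁻¹ • ∑ j ∈ L, w j = (y : ℂ) • wt := by
    have h := inv_sqrt_card_smul_sum_eq_smul_normalizedSum (𝕜 := ℂ) (w := w) hLne Finset.univ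
    rwa [← hwt', ← hy', Finset.card_univ, Fintype.card_fin] at h
  have hsr : s = (y : ℂ) • wt + (√(1 - y ^ 2) : ℂ) • r := by
    have hN : (0 : ℝ) < N := Nat.cast_pos.2 (Nat.zero_lt_of_lt hℓN)
    have hc : √(1 - (ℓ : ℝ) / N) ≠ 0 :=
      (Real.sqrt_pos.2 (by rw [sub_pos, div_lt_one hN]; exact_mod_cast hℓN)).ne'
    rw [hr, hSL, hy, Real.sq_sqrt (by positivity), ← hy, smul_smul,
      mul_inv_cancel₀ (by exact_mod_cast hc), one_smul]
    abel
  obtain ⟨hHwt, hHs⟩ : H wt = (E : ℂ) • wt + ((E : ℂ) * y) • s ∧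
      H s = ((E : ℂ) * y) • wt + (E : ℂ) • s := by
    rw [hs'] at hH ⊢
    rw [hwt', hy']
    exact hw.apply_normalizedSum_of_forall_apply_eq (Finset.subset_univ L) hLne hH
  rw [NormedSpace.exp_neg_I_mul_smul_apply hHwt hHs, hsr]
  push_cast
  match_scalars <;> ring

/-- the explicit solution of the Schrödinger equation,
`ψ(t) = e^{−iEt} {[y cos(Eyt) − i sin(Eyt)] w̃ + √(1 − y²) cos(Eyt) r}` with `y = √(ℓ/N)`. -/
theorem explicit_solution_of_schrodinger_evolution
    (N ℓ : ℕ) (hN : 2 ≤ N) (hℓ1 : 1 ≤ ℓ) (hℓN : ℓ < N)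
    (w : Fin N → EuclideanSpace ℂ (Fin N)) (hw : Orthonormal ℂ w)
    (E : ℝ) (hE : 0 < E)
    (s : EuclideanSpace ℂ (Fin N))
    (hs : s = ((Real.sqrt N : ℂ))⁻¹ • ∑ j : Fin N, w j)
    (H : EuclideanSpace ℂ (Fin N) →L[ℂ] EuclideanSpace ℂ (Fin N))
    (hH : ∀ u, H u = (E : ℂ) •
      ((∑ j ∈ Finset.univ.filter (fun j : Fin N => (j : ℕ) < ℓ), ⟪w j, u⟫ • w j)
        + ⟪s, u⟫ • s))
    (r : EuclideanSpace ℂ (Fin N))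
    (hr : r = ((Real.sqrt (1 - (ℓ : ℝ) / N) : ℂ))⁻¹ •
      (s - ((Real.sqrt N : ℂ))⁻¹ •
        ∑ j ∈ Finset.univ.filter (fun j : Fin N => (j : ℕ) < ℓ), w j))
    (wt : EuclideanSpace ℂ (Fin N))
    (hwt : wt = ((Real.sqrt ℓ : ℂ))⁻¹ •
      ∑ j ∈ Finset.univ.filter (fun j : Fin N => (j : ℕ) < ℓ), w j)
    (y : ℝ) (hy : y = Real.sqrt ((ℓ : ℝ) / N)) :
    ∀ t : ℝ, 0 ≤ t →
      NormedSpace.exp ((-(Complex.I * (t : ℂ))) • H) s =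
        Complex.exp (-(Complex.I * (E : ℂ) * (t : ℂ))) •
          (((y : ℂ) * (Real.cos (E * y * t) : ℂ)
              - Complex.I * (Real.sin (E * y * t) : ℂ)) • wt
            + ((Real.sqrt (1 - y ^ 2) : ℂ) * (Real.cos (E * y * t) : ℂ)) • r) :=
  explicit_solution_of_schrodinger_evolution_general N ℓ hℓ1 hℓN w hw E s hs H hH r hr wt hwt y hy
end
end

section
/- For every t ≥ 0, the squared modulus of the amplitude of ψ(t) = exp(−itH) s along w̃ is |⟨w̃, ψ(t)⟩|² = sin²(Eyt) + y² cos²(Eyt), where y = √(ℓ/N); in particular, at time T = π/(2Ey) = (π/(2E))√(N/ℓ) this probability equals 1, i.e. exp(−iTH) s lies in L (up to a phase it equals w̃). -/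
/-! The vectors `s` and `w̃` span an `H`-invariant plane on which `H` acts as
`E [[1, y], [y, 1]]`, with eigenvectors `s ± w̃` for the eigenvalues `E (1 ± y)`. Hence
`exp(-itH) s = e^{-iEt} (cos (Eyt) s - i sin (Eyt) w̃)`, whose amplitude along `w̃` is
`e^{-iEt} (y cos (Eyt) - i sin (Eyt))`; at `Eyt = π/2` only the `w̃`-component survives. -/

noncomputable section

local notation "⟪" x ", " y "⟫" => @inner ℂ _ _ x y

open Complex Finset

section Evolution

variable {V : Type*} [NormedAddCommGroup V] [NormedSpace ℂ V] [CompleteSpace V]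

theorem NormedSpace.exp_apply_of_apply_eq_smul_s7 {A : V →L[ℂ] V} {v : V} {μ : ℂ}
    (h : A v = μ • v) : NormedSpace.exp A v = Complex.exp μ • v := by
  have hpow : ∀ n : ℕ, (A ^ n) v = μ ^ n • v := fun n => by
    induction n with
    | zero => simp
    | succ n ih => simp [pow_succ, ih, h, smul_smul, ← pow_succ']
  have hA := ((NormedSpace.exp_series_hasSum_exp' (𝕂 := ℂ) A).mapL
    (ContinuousLinearMap.apply ℂ V v))
  have hμ := (NormedSpace.exp_series_hasSum_exp' (𝕂 := ℂ) μ).smul_const v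
  rw [← Complex.exp_eq_exp_ℂ] at hμ
  refine hA.unique (hμ.congr_fun fun n => ?_)
  simp [hpow, smul_smul]

theorem NormedSpace.exp_apply_of_apply_eq_smul_add_smul {A : V →L[ℂ] V} {u v : V} {a b : ℂ}
    (hu : A u = a • u + b • v) (hv : A v = b • u + a • v) :
    NormedSpace.exp A u = Complex.exp a • (Complex.cosh b • u + Complex.sinh b • v) := by
  have hplus : NormedSpace.exp A (u + v) = Complex.exp (a + b) • (u + v) :=
    NormedSpace.exp_apply_of_apply_eq_smul_s7 (by rw [map_add, hu, hv]; module)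
  have hminus : NormedSpace.exp A (u - v) = Complex.exp (a - b) • (u - v) :=
    NormedSpace.exp_apply_of_apply_eq_smul_s7 (by rw [map_sub, hu, hv]; module)
  have hsplit : NormedSpace.exp A u =
      (2 : ℂ)⁻¹ • (NormedSpace.exp A (u + v) + NormedSpace.exp A (u - v)) := by
    rw [← map_add, ← map_smul]; congr 1; module
  rw [hsplit, hplus, hminus, sub_eq_add_neg, Complex.exp_add, Complex.exp_add,
    ← Complex.cosh_add_sinh b, ← Complex.cosh_sub_sinh b]
  module

theorem NormedSpace.exp_neg_I_mul_smul_apply_s7 {H : V →L[ℂ] V} {u v : V} {E y : ℝ}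
    (hu : H u = (E : ℂ) • (u + (y : ℂ) • v)) (hv : H v = (E : ℂ) • ((y : ℂ) • u + v)) (t : ℝ) :
    NormedSpace.exp ((-(I * t)) • H) u = Complex.exp ((-(E * t) : ℝ) * I) •
      ((Real.cos (E * y * t) : ℂ) • u - (Real.sin (E * y * t) * I : ℂ) • v) := by
  rw [NormedSpace.exp_apply_of_apply_eq_smul_add_smul (u := u) (v := v)
      (a := (-(E * t) : ℝ) * I) (b := (-(E * y * t) : ℝ) * I)
      (by rw [smul_apply, hu]; push_cast; module)
      (by rw [smul_apply, hv]; push_cast; module),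
    cosh_mul_I, sinh_mul_I, ← ofReal_cos, ← ofReal_sin, Real.cos_neg, Real.sin_neg]
  push_cast
  module

end Evolution

theorem NormedSpace.norm_inner_exp_neg_I_mul_smul_apply_sq {V : Type*} [NormedAddCommGroup V]
    [InnerProductSpace ℂ V] [CompleteSpace V] {H : V →L[ℂ] V} {u v : V} {E y : ℝ}
    (hu : H u = (E : ℂ) • (u + (y : ℂ) • v)) (hv : H v = (E : ℂ) • ((y : ℂ) • u + v))
    (hvu : ⟪v, u⟫ = y) (hvv : ⟪v, v⟫ = 1) (t : ℝ) :
    ‖⟪v, NormedSpace.exp ((-(I * t)) • H) u⟫‖ ^ 2 =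
      Real.sin (E * y * t) ^ 2 + y ^ 2 * Real.cos (E * y * t) ^ 2 := by
  rw [NormedSpace.exp_neg_I_mul_smul_apply_s7 hu hv, inner_smul_right, inner_sub_right,
    inner_smul_right, inner_smul_right, hvu, hvv, norm_mul, norm_exp_ofReal_mul_I, one_mul,
    Complex.sq_norm, ← ofReal_mul, mul_one, sub_eq_add_neg, ← neg_mul, ← ofReal_neg,
    normSq_add_mul_I]
  ring

section UniformSuperposition

variable {ι V : Type*} [NormedAddCommGroup V] [InnerProductSpace ℂ V] {w : ι → V}

def uniformSuperposition (w : ι → V) (F : Finset ι) : V :=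
  ((Real.sqrt #F : ℂ))⁻¹ • ∑ j ∈ F, w j

theorem Orthonormal.inner_uniformSuperposition (hw : Orthonormal ℂ w) {G : Finset ι} {j : ι}
    (hj : j ∈ G) : ⟪w j, uniformSuperposition w G⟫ = ((Real.sqrt #G : ℂ))⁻¹ := by
  classical
  simp [uniformSuperposition, orthonormal_iff_ite.mp hw, hj]

theorem Orthonormal.inner_uniformSuperposition_of_subset (hw : Orthonormal ℂ w)
    {F G : Finset ι} (hFG : F ⊆ G) :
    ⟪uniformSuperposition w F, uniformSuperposition w G⟫ = (Real.sqrt (#F / #G) : ℂ) := by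
  rw [uniformSuperposition, inner_smul_left, sum_inner,
    sum_congr rfl fun j hj => hw.inner_uniformSuperposition (hFG hj)]
  rcases F.eq_empty_or_nonempty with rfl | hF
  · simp
  have hF' : (Real.sqrt #F : ℂ) ≠ 0 := ofReal_ne_zero.mpr (by positivity)
  have hcard : (#F : ℂ) = Real.sqrt #F * Real.sqrt #F := by
    exact_mod_cast (Real.mul_self_sqrt (Nat.cast_nonneg #F)).symm
  simp only [sum_const, nsmul_eq_mul, map_inv₀, conj_ofReal, Real.sqrt_div' _ (Nat.cast_nonneg _),
    hcard, ofReal_div]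
  field_simp

theorem Orthonormal.sum_inner_smul_uniformSuperposition_of_subset (hw : Orthonormal ℂ w)
    {F G : Finset ι} (hFG : F ⊆ G) :
    ∑ j ∈ F, ⟪w j, uniformSuperposition w G⟫ • w j =
      (Real.sqrt (#F / #G) : ℂ) • uniformSuperposition w F := by
  rw [sum_congr rfl fun j hj => by rw [hw.inner_uniformSuperposition (hFG hj)], ← smul_sum]
  rcases F.eq_empty_or_nonempty with rfl | hF
  · simp
  have hF' : (Real.sqrt #F : ℂ) ≠ 0 := ofReal_ne_zero.mpr (by positivity)
  rw [uniformSuperposition, smul_smul, Real.sqrt_div' _ (Nat.cast_nonneg _), ofReal_div]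
  field_simp

theorem Orthonormal.inner_uniformSuperposition_self (hw : Orthonormal ℂ w) {F : Finset ι}
    (hF : F.Nonempty) : ⟪uniformSuperposition w F, uniformSuperposition w F⟫ = 1 := by
  rw [hw.inner_uniformSuperposition_of_subset subset_rfl,
    div_self (Nat.cast_ne_zero.mpr hF.card_pos.ne'), Real.sqrt_one, ofReal_one]

theorem Orthonormal.sum_inner_smul_uniformSuperposition_self (hw : Orthonormal ℂ w)
    {F : Finset ι} (hF : F.Nonempty) :
    ∑ j ∈ F, ⟪w j, uniformSuperposition w F⟫ • w j = uniformSuperposition w F := by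
  rw [hw.sum_inner_smul_uniformSuperposition_of_subset subset_rfl,
    div_self (Nat.cast_ne_zero.mpr hF.card_pos.ne'), Real.sqrt_one, ofReal_one, one_smul]

theorem uniformSuperposition_mem_span (w : ι → V) (F : Finset ι) :
    uniformSuperposition w F ∈ Submodule.span ℂ (w '' F) :=
  Submodule.smul_mem _ _ <| Submodule.sum_mem _ fun _ hj =>
    Submodule.subset_span (Set.mem_image_of_mem w hj)

end UniformSuperposition

theorem success_probability_and_terminal_time_general
    (N ℓ : ℕ) (hℓ1 : 1 ≤ ℓ) (hℓN : ℓ < N)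
    (w : Fin N → EuclideanSpace ℂ (Fin N)) (hw : Orthonormal ℂ w)
    (E : ℝ) (hE : 0 < E)
    (s : EuclideanSpace ℂ (Fin N))
    (hs : s = ((Real.sqrt N : ℂ))⁻¹ • ∑ j : Fin N, w j)
    (H : EuclideanSpace ℂ (Fin N) →L[ℂ] EuclideanSpace ℂ (Fin N))
    (hH : ∀ u, H u = (E : ℂ) •
      ((∑ j ∈ Finset.univ.filter (fun j : Fin N => (j : ℕ) < ℓ), ⟪w j, u⟫ • w j)
        + ⟪s, u⟫ • s))
    (L : Submodule ℂ (EuclideanSpace ℂ (Fin N)))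
    (hL : L = Submodule.span ℂ (w '' {j | (j : ℕ) < ℓ}))
    (wt : EuclideanSpace ℂ (Fin N))
    (hwt : wt = ((Real.sqrt ℓ : ℂ))⁻¹ •
      ∑ j ∈ Finset.univ.filter (fun j : Fin N => (j : ℕ) < ℓ), w j)
    (y : ℝ) (hy : y = Real.sqrt ((ℓ : ℝ) / N))
    (T : ℝ) (hT : T = Real.pi / (2 * E * y)) :
    (∀ t : ℝ, 0 ≤ t →
      ‖⟪wt, NormedSpace.exp ((-(Complex.I * (t : ℂ))) • H) s⟫‖ ^ 2 =
        Real.sin (E * y * t) ^ 2 + y ^ 2 * Real.cos (E * y * t) ^ 2) ∧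
    NormedSpace.exp ((-(Complex.I * (T : ℂ))) • H) s ∈ L := by
  set F := univ.filter fun j : Fin N => (j : ℕ) < ℓ
  have hcard : #F = ℓ := by rw [Fin.card_filter_val_lt]; omega
  have hN0 : 0 < N := by omega
  have hF : F.Nonempty := card_pos.mp (by omega)
  obtain rfl : s = uniformSuperposition w univ := by simp [hs, uniformSuperposition]
  obtain rfl : wt = uniformSuperposition w F := by rw [hwt, uniformSuperposition, hcard]
  have hy' : y = Real.sqrt (#F / #(univ : Finset (Fin N))) := by simp [hy, hcard]
  have hsF : ⟪uniformSuperposition w univ, uniformSuperposition w F⟫ = y := by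
    rw [← inner_conj_symm, hw.inner_uniformSuperposition_of_subset (subset_univ F), hy',
      conj_ofReal]
  have hHs : H (uniformSuperposition w univ) =
      (E : ℂ) • (uniformSuperposition w univ + (y : ℂ) • uniformSuperposition w F) := by
    rw [hH, hw.sum_inner_smul_uniformSuperposition_of_subset (subset_univ F),
      hw.inner_uniformSuperposition_self (univ_nonempty_iff.mpr ⟨⟨0, hN0⟩⟩), hy']
    module
  have hHF : H (uniformSuperposition w F) =
      (E : ℂ) • ((y : ℂ) • uniformSuperposition w univ + uniformSuperposition w F) := by
    rw [hH, hw.sum_inner_smul_uniformSuperposition_self hF, hsF]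
    module
  refine ⟨fun t _ => NormedSpace.norm_inner_exp_neg_I_mul_smul_apply_sq hHs hHF
    (by rw [hw.inner_uniformSuperposition_of_subset (subset_univ F), hy'])
    (hw.inner_uniformSuperposition_self hF) t, ?_⟩
  have hEyT : E * y * T = Real.pi / 2 := by
    have hy0 : y ≠ 0 := by
      rw [hy]
      exact (Real.sqrt_pos.mpr (div_pos (by exact_mod_cast hℓ1) (by exact_mod_cast hN0))).ne'
    rw [hT]
    field_simp
  rw [NormedSpace.exp_neg_I_mul_smul_apply_s7 hHs hHF, hEyT, Real.cos_pi_div_two,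
    Real.sin_pi_div_two]
  have hL' : L = Submodule.span ℂ (w '' F) := by simp [hL, F]
  simpa [hL'] using Submodule.smul_mem _ _
    (Submodule.smul_mem _ I (uniformSuperposition_mem_span w F))

/-- the success probability `|⟨w̃, ψ(t)⟩|² = sin²(Eyt) + y² cos²(Eyt)` with
`y = √(ℓ/N)`, and at `T = π/(2Ey)` the state `exp(−iTH) s` lies in `L`. -/
theorem success_probability_and_terminal_time
    (N ℓ : ℕ) (hN : 2 ≤ N) (hℓ1 : 1 ≤ ℓ) (hℓN : ℓ < N)
    (w : Fin N → EuclideanSpace ℂ (Fin N)) (hw : Orthonormal ℂ w)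
    (E : ℝ) (hE : 0 < E)
    (s : EuclideanSpace ℂ (Fin N))
    (hs : s = ((Real.sqrt N : ℂ))⁻¹ • ∑ j : Fin N, w j)
    (H : EuclideanSpace ℂ (Fin N) →L[ℂ] EuclideanSpace ℂ (Fin N))
    (hH : ∀ u, H u = (E : ℂ) •
      ((∑ j ∈ Finset.univ.filter (fun j : Fin N => (j : ℕ) < ℓ), ⟪w j, u⟫ • w j)
        + ⟪s, u⟫ • s))
    (L : Submodule ℂ (EuclideanSpace ℂ (Fin N)))
    (hL : L = Submodule.span ℂ (w '' {j | (j : ℕ) < ℓ}))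
    (wt : EuclideanSpace ℂ (Fin N))
    (hwt : wt = ((Real.sqrt ℓ : ℂ))⁻¹ •
      ∑ j ∈ Finset.univ.filter (fun j : Fin N => (j : ℕ) < ℓ), w j)
    (y : ℝ) (hy : y = Real.sqrt ((ℓ : ℝ) / N))
    (T : ℝ) (hT : T = Real.pi / (2 * E * y)) :
    (∀ t : ℝ, 0 ≤ t →
      ‖⟪wt, NormedSpace.exp ((-(Complex.I * (t : ℂ))) • H) s⟫‖ ^ 2 =
        Real.sin (E * y * t) ^ 2 + y ^ 2 * Real.cos (E * y * t) ^ 2) ∧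
    NormedSpace.exp ((-(Complex.I * (T : ℂ))) • H) s ∈ L :=
  success_probability_and_terminal_time_general N ℓ hℓ1 hℓN w hw E hE s hs H hH L hL wt hwt y hy T
    hT
end
end

section
/- Let φ_1, …, φ_Ñ and ψ be unit vectors in ℋ with φ_k ∈ L_k for each k. Then ∑_{k=1}^{Ñ} ‖φ_k − ψ‖² ≥ 2Ñ − 2√Ñ. -/
/-!
Unit vectors taken from mutually orthogonal subspaces form an orthonormal family, so by
Pythagoras `‖∑ k, φ k‖ = √Ñ`. Expanding the squares,
`∑ k, ‖φ k - ψ‖ ^ 2 = 2Ñ - 2 Re ⟪∑ k, φ k, ψ⟫`, and Cauchy–Schwarz bounds the inner product by `√Ñ`.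
-/

open scoped InnerProductSpace

section

variable {𝕜 E ι : Type*} [RCLike 𝕜] [NormedAddCommGroup E] [InnerProductSpace 𝕜 E]

open RCLike

theorem Orthonormal.norm_sum_sq_eq_card [Fintype ι] {v : ι → E} (hv : Orthonormal 𝕜 v) :
    ‖∑ i, v i‖ ^ 2 = Fintype.card ι := by
  have h := hv.inner_sum (fun _ => (1 : 𝕜)) (fun _ => 1) Finset.univ
  simp only [one_smul, map_one, mul_one, Finset.sum_const, Finset.card_univ] at h
  rw [← inner_self_eq_norm_sq (𝕜 := 𝕜), h]
  simp

theorem Orthonormal.le_sum_norm_sub_sq [Fintype ι] {v : ι → E} (hv : Orthonormal 𝕜 v) (x : E) :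
    Fintype.card ι + Fintype.card ι * ‖x‖ ^ 2 - 2 * √(Fintype.card ι) * ‖x‖ ≤
      ∑ i, ‖v i - x‖ ^ 2 := by
  have hsum : ∑ i, ‖v i - x‖ ^ 2 =
      Fintype.card ι + Fintype.card ι * ‖x‖ ^ 2 - 2 * re ⟪∑ i, v i, x⟫_𝕜 := by
    simp only [@norm_sub_sq 𝕜, hv.norm_eq_one, sum_inner, map_sum, Finset.sum_add_distrib,
      Finset.sum_sub_distrib, Finset.mul_sum, one_pow, Finset.sum_const, Finset.card_univ,
      nsmul_eq_mul, mul_one]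
    ring
  have hnorm : ‖∑ i, v i‖ = √(Fintype.card ι) := by
    rw [← hv.norm_sum_sq_eq_card, Real.sqrt_sq (norm_nonneg _)]
  have hcs : re ⟪∑ i, v i, x⟫_𝕜 ≤ √(Fintype.card ι) * ‖x‖ := hnorm ▸ re_inner_le_norm _ _
  rw [hsum]
  linarith

theorem Orthonormal.isOrtho_span_range_comp {ι' : Type*} {v : ι → E} (hv : Orthonormal 𝕜 v)
    {f g : ι' → ι} (hfg : ∀ a b, f a ≠ g b) :
    Submodule.span 𝕜 (Set.range (v ∘ f)) ⟂ Submodule.span 𝕜 (Set.range (v ∘ g)) := by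
  rw [Submodule.isOrtho_span]
  rintro _ ⟨a, rfl⟩ _ ⟨b, rfl⟩
  exact hv.inner_eq_zero (hfg a b)

theorem orthonormal_of_mem_of_pairwise_isOrtho {V : ι → Submodule 𝕜 E}
    (hV : Pairwise fun i j => V i ⟂ V j) {v : ι → E} (hvV : ∀ i, v i ∈ V i)
    (hv : ∀ i, ‖v i‖ = 1) : Orthonormal 𝕜 v :=
  ⟨hv, fun i j hij => (hV hij).inner_eq (hvV i) (hvV j)⟩

end

theorem lower_bound_sum_dist_sq_general
    (Nt ℓ : ℕ)
    (w : Fin Nt × Fin ℓ → EuclideanSpace ℂ (Fin (Nt * ℓ)))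
    (hw : Orthonormal ℂ w)
    (L : Fin Nt → Submodule ℂ (EuclideanSpace ℂ (Fin (Nt * ℓ))))
    (hL : ∀ k, L k = Submodule.span ℂ (Set.range fun i : Fin ℓ => w (k, i)))
    (φ : Fin Nt → EuclideanSpace ℂ (Fin (Nt * ℓ)))
    (ψ : EuclideanSpace ℂ (Fin (Nt * ℓ)))
    (hφ1 : ∀ k, ‖φ k‖ = 1) (hψ1 : ‖ψ‖ = 1)
    (hφL : ∀ k, φ k ∈ L k) :
    2 * (Nt : ℝ) - 2 * Real.sqrt Nt ≤ ∑ k : Fin Nt, ‖φ k - ψ‖ ^ 2 := by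
  have hblocks : Pairwise fun j k => L j ⟂ L k := by
    intro j k hjk
    rw [hL j, hL k]
    exact hw.isOrtho_span_range_comp fun a b => by simp [hjk]
  have hφ : Orthonormal ℂ φ := orthonormal_of_mem_of_pairwise_isOrtho hblocks hφL hφ1
  have := hφ.le_sum_norm_sub_sq ψ
  rw [hψ1, Fintype.card_fin] at this
  linarith

/-- if `φ_k ∈ L_k` are unit vectors and `ψ` is a unit vector, then
`∑_k ‖φ_k − ψ‖² ≥ 2Ñ − 2√Ñ`. -/
theorem lower_bound_sum_dist_sq
    (Nt ℓ : ℕ) (hNt : 1 ≤ Nt) (hℓ : 1 ≤ ℓ)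
    (w : Fin Nt × Fin ℓ → EuclideanSpace ℂ (Fin (Nt * ℓ)))
    (hw : Orthonormal ℂ w)
    (hspan : Submodule.span ℂ (Set.range w) = ⊤)
    (L : Fin Nt → Submodule ℂ (EuclideanSpace ℂ (Fin (Nt * ℓ))))
    (hL : ∀ k, L k = Submodule.span ℂ (Set.range fun i : Fin ℓ => w (k, i)))
    (φ : Fin Nt → EuclideanSpace ℂ (Fin (Nt * ℓ)))
    (ψ : EuclideanSpace ℂ (Fin (Nt * ℓ)))
    (hφ1 : ∀ k, ‖φ k‖ = 1) (hψ1 : ‖ψ‖ = 1)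
    (hφL : ∀ k, φ k ∈ L k) :
    2 * (Nt : ℝ) - 2 * Real.sqrt Nt ≤ ∑ k : Fin Nt, ‖φ k - ψ‖ ^ 2 :=
  lower_bound_sum_dist_sq_general Nt ℓ w hw L hL φ ψ hφ1 hψ1 hφL
end

section
/- Suppose ψ, ψ_1, …, ψ_Ñ : [0, T̃] → ℋ are differentiable curves satisfying the Schrödinger equations i dψ/dt = H_D(t) ψ(t) and i dψ_k/dt = (E P_k + H_D(t)) ψ_k(t) for each k, with common initial condition ψ(0) = ψ_k(0) = w_I for a unit vector w_I ∈ ℋ. Then ∑_{k=1}^{Ñ} ‖ψ_k(T̃) − ψ(T̃)‖² ≤ 2E√Ñ T̃. -/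
/-! Norm conservation makes all states unit vectors, so `‖ψₖ(T) - ψ(T)‖² = 2 - 2 Re ⟪ψₖ(T), ψ(T)⟫`
and the sum equals `2 Re (g 0 - g T)` for the correlation `g t = ∑ₖ ⟪ψₖ t, ψ t⟫`. As both
evolutions share `H_D`, it cancels in `g'`, leaving `g' = i E ∑ₖ ⟪ψₖ, Pₖ ψ⟫`, of modulus at most
`E ∑ₖ ‖Pₖ ψ‖ ≤ E √Ñ` by Cauchy–Schwarz and Bessel's inequality over the orthogonal blocks. The mean
value inequality then gives `‖g T - g 0‖ ≤ E √Ñ T`. -/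

open scoped InnerProductSpace
open Set Submodule Complex

section Projection

variable {𝕜 E ι : Type*} [RCLike 𝕜] [NormedAddCommGroup E] [InnerProductSpace 𝕜 E]

instance Submodule.hasOrthogonalProjection_span_range [Finite ι] (v : ι → E) :
    (span 𝕜 (range v)).HasOrthogonalProjection :=
  have := FiniteDimensional.span_of_finite 𝕜 (finite_range v)
  inferInstance

variable [Fintype ι]

theorem OrthonormalBasis.norm_sq_starProjection_eq_sum {U : Submodule 𝕜 E}
    [U.HasOrthogonalProjection] (b : OrthonormalBasis ι 𝕜 U) (x : E) :
    ‖U.starProjection x‖ ^ 2 = ∑ i, ‖⟪(b i : E), x⟫_𝕜‖ ^ 2 := by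
  rw [starProjection_apply, norm_coe, ← b.sum_sq_norm_inner_right]
  simp only [inner_orthogonalProjectionOnto_eq_of_mem_left]

theorem Orthonormal.norm_sq_starProjection_span_eq_sum {v : ι → E} (hv : Orthonormal 𝕜 v)
    (x : E) : ‖(span 𝕜 (range v)).starProjection x‖ ^ 2 = ∑ i, ‖⟪v i, x⟫_𝕜‖ ^ 2 := by
  have hb : Orthonormal 𝕜 (Module.Basis.span hv.linearIndependent) := by
    convert orthonormal_span hv
    exact Subtype.ext_iff.mp (Module.Basis.span_apply hv.linearIndependent _)
  simpa using (Module.Basis.span hv.linearIndependent).toOrthonormalBasis hb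
    |>.norm_sq_starProjection_eq_sum x

theorem Orthonormal.sum_norm_sq_starProjection_span_le {κ : Type*} [Fintype κ]
    {w : κ × ι → E} (hw : Orthonormal 𝕜 w) (x : E) :
    ∑ k, ‖(span 𝕜 (range fun i => w (k, i))).starProjection x‖ ^ 2 ≤ ‖x‖ ^ 2 := by
  calc ∑ k, ‖(span 𝕜 (range fun i => w (k, i))).starProjection x‖ ^ 2
      = ∑ k, ∑ i, ‖⟪w (k, i), x⟫_𝕜‖ ^ 2 := Finset.sum_congr rfl fun k _ =>
        (hw.comp _ (Prod.mk_right_injective k)).norm_sq_starProjection_span_eq_sum x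
    _ ≤ ‖x‖ ^ 2 := by
        simpa only [← Fintype.sum_prod_type'] using hw.sum_inner_products_le x (s := Finset.univ)

theorem Orthonormal.sum_norm_starProjection_span_le {κ : Type*} [Fintype κ]
    {w : κ × ι → E} (hw : Orthonormal 𝕜 w) (x : E) :
    ∑ k, ‖(span 𝕜 (range fun i => w (k, i))).starProjection x‖ ≤
      √(Fintype.card κ) * ‖x‖ := by
  calc ∑ k, ‖(span 𝕜 (range fun i => w (k, i))).starProjection x‖
      ≤ √(Fintype.card κ * ∑ k, ‖(span 𝕜 (range fun i => w (k, i))).starProjection x‖ ^ 2) :=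
        Real.le_sqrt_of_sq_le (by rw [← Finset.card_univ]; exact sq_sum_le_card_mul_sum_sq)
    _ ≤ √(Fintype.card κ * ‖x‖ ^ 2) := by gcongr; exact hw.sum_norm_sq_starProjection_span_le x
    _ = √(Fintype.card κ) * ‖x‖ := by
        rw [Real.sqrt_mul (Nat.cast_nonneg _), Real.sqrt_sq (norm_nonneg x)]

end Projection

section Schrodinger

variable {E : Type*} [NormedAddCommGroup E] [InnerProductSpace ℂ E]

theorem hasDerivAt_inner_of_schrodinger {φ₁ φ₂ : ℝ → E} {A₁ A₂ : E →L[ℂ] E} {t : ℝ}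
    (hA₁ : (A₁ : E →ₗ[ℂ] E).IsSymmetric) (h₁ : HasDerivAt φ₁ (-I • A₁ (φ₁ t)) t)
    (h₂ : HasDerivAt φ₂ (-I • A₂ (φ₂ t)) t) :
    HasDerivAt (fun s => ⟪φ₁ s, φ₂ s⟫_ℂ) (I * ⟪φ₁ t, (A₁ - A₂) (φ₂ t)⟫_ℂ) t := by
  refine (h₁.inner ℂ h₂).congr_deriv ?_
  rw [inner_smul_left, inner_smul_right, hA₁.apply_clm, sub_apply, inner_sub_right]
  simp only [map_neg, conj_I]
  ring

theorem norm_eq_norm_zero_of_schrodinger {φ : ℝ → E} {A : ℝ → E →L[ℂ] E} {T : ℝ}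
    (hA : ∀ t ∈ Icc 0 T, (A t : E →ₗ[ℂ] E).IsSymmetric)
    (hφ : ∀ t ∈ Icc 0 T, HasDerivAt φ (-I • A t (φ t)) t) {t : ℝ} (ht : t ∈ Icc 0 T) :
    ‖φ t‖ = ‖φ 0‖ := by
  have hderiv : ∀ s ∈ Icc 0 T,
      HasDerivWithinAt (fun s => ⟪φ s, φ s⟫_ℂ) 0 (Icc 0 T) s := fun s hs => by
    simpa using (hasDerivAt_inner_of_schrodinger (hA s hs) (hφ s hs) (hφ s hs)).hasDerivWithinAt
  have hconst := norm_image_sub_le_of_norm_deriv_le_segment' hderiv (C := 0) (by simp) t ht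
  rw [zero_mul, norm_le_zero_iff, sub_eq_zero] at hconst
  rw [norm_eq_sqrt_re_inner (𝕜 := ℂ), hconst, ← norm_eq_sqrt_re_inner]

theorem norm_sum_inner_sub_le_of_schrodinger {κ : Type*} [Fintype κ] {φ : ℝ → E}
    {φk : κ → ℝ → E} {A : ℝ → E →L[ℂ] E} {B : κ → E →L[ℂ] E} {T C : ℝ} (hT : 0 ≤ T)
    (hA : ∀ t ∈ Icc 0 T, (A t : E →ₗ[ℂ] E).IsSymmetric) (hB : ∀ k, (B k : E →ₗ[ℂ] E).IsSymmetric)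
    (hφ : ∀ t ∈ Icc 0 T, HasDerivAt φ (-I • A t (φ t)) t)
    (hφk : ∀ k, ∀ t ∈ Icc 0 T, HasDerivAt (φk k) (-I • (B k + A t) (φk k t)) t)
    (hC : ∀ t ∈ Icc 0 T, ∑ k, ‖φk k t‖ * ‖B k (φ t)‖ ≤ C) :
    ‖∑ k, ⟪φk k T, φ T⟫_ℂ - ∑ k, ⟪φk k 0, φ 0⟫_ℂ‖ ≤ C * T := by
  have hderiv : ∀ t ∈ Icc 0 T, HasDerivWithinAt (fun s => ∑ k, ⟪φk k s, φ s⟫_ℂ)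
      (∑ k, I * ⟪φk k t, B k (φ t)⟫_ℂ) (Icc 0 T) t := fun t ht =>
    HasDerivWithinAt.fun_sum fun k _ => by
      simpa using (hasDerivAt_inner_of_schrodinger ((hB k).add (hA t ht)) (hφk k t ht)
        (hφ t ht)).hasDerivWithinAt
  have hbound : ∀ t ∈ Ico 0 T, ‖∑ k, I * ⟪φk k t, B k (φ t)⟫_ℂ‖ ≤ C := fun t ht =>
    calc ‖∑ k, I * ⟪φk k t, B k (φ t)⟫_ℂ‖ ≤ ∑ k, ‖I * ⟪φk k t, B k (φ t)⟫_ℂ‖ := norm_sum_le _ _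
      _ ≤ ∑ k, ‖φk k t‖ * ‖B k (φ t)‖ := by
          gcongr with k
          rw [norm_mul, norm_I, one_mul]
          exact norm_inner_le_norm _ _
      _ ≤ C := hC t (Ico_subset_Icc_self ht)
  simpa using norm_image_sub_le_of_norm_deriv_le_segment' hderiv hbound T ⟨hT, le_rfl⟩

end Schrodinger

theorem upper_bound_sum_dist_sq_of_schrodinger_general
    (Nt ℓ : ℕ)
    (w : Fin Nt × Fin ℓ → EuclideanSpace ℂ (Fin (Nt * ℓ)))
    (hw : Orthonormal ℂ w)
    (L : Fin Nt → Submodule ℂ (EuclideanSpace ℂ (Fin (Nt * ℓ))))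
    (hL : ∀ k, L k = Submodule.span ℂ (Set.range fun i : Fin ℓ => w (k, i)))
    (P : Fin Nt → (EuclideanSpace ℂ (Fin (Nt * ℓ)) →L[ℂ] EuclideanSpace ℂ (Fin (Nt * ℓ))))
    (hP : ∀ k, P k = (L k).subtypeL.comp (L k).orthogonalProjectionOnto)
    (E T : ℝ) (hE : 0 < E) (hT : 0 < T)
    (HD : ℝ → (EuclideanSpace ℂ (Fin (Nt * ℓ)) →L[ℂ] EuclideanSpace ℂ (Fin (Nt * ℓ))))
    (hHDsa : ∀ t ∈ Set.Icc (0 : ℝ) T, IsSelfAdjoint (HD t))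
    (wI : EuclideanSpace ℂ (Fin (Nt * ℓ))) (hwI : ‖wI‖ = 1)
    (ψ : ℝ → EuclideanSpace ℂ (Fin (Nt * ℓ)))
    (ψk : Fin Nt → ℝ → EuclideanSpace ℂ (Fin (Nt * ℓ)))
    (hψ0 : ψ 0 = wI) (hψk0 : ∀ k, ψk k 0 = wI)
    (hψ : ∀ t ∈ Set.Icc (0 : ℝ) T,
      HasDerivAt ψ ((-Complex.I) • HD t (ψ t)) t)
    (hψk : ∀ k, ∀ t ∈ Set.Icc (0 : ℝ) T,
      HasDerivAt (ψk k) ((-Complex.I) • (((E : ℂ) • P k + HD t) (ψk k t))) t) :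
    ∑ k : Fin Nt, ‖ψk k T - ψ T‖ ^ 2 ≤ 2 * E * Real.sqrt Nt * T := by
  obtain rfl : L = _ := funext hL
  obtain rfl : P = _ := funext hP
  have hHD := fun t ht => (hHDsa t ht).isSymmetric
  have hEP := fun k => ((span ℂ (range fun i => w (k, i))).starProjection_isSymmetric).smul
    (conj_ofReal E)
  have hnψ : ∀ t ∈ Icc 0 T, ‖ψ t‖ = 1 := fun t ht => by
    rw [norm_eq_norm_zero_of_schrodinger hHD hψ ht, hψ0, hwI]
  have hnψk : ∀ k, ∀ t ∈ Icc 0 T, ‖ψk k t‖ = 1 := fun k t ht => by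
    rw [norm_eq_norm_zero_of_schrodinger (fun s hs => (hEP k).add (hHD s hs)) (hψk k) ht,
      hψk0, hwI]
  have hcorr := norm_sum_inner_sub_le_of_schrodinger hT.le hHD hEP hψ hψk
    (B := fun k => (E : ℂ) • (span ℂ (range fun i => w (k, i))).starProjection)
    (C := E * √Nt) fun t ht => by
      simp only [hnψk _ t ht, one_mul, smul_apply, norm_smul, norm_real,
        Real.norm_of_nonneg hE.le, ← Finset.mul_sum]
      have hbessel := hw.sum_norm_starProjection_span_le (ψ t)
      rw [hnψ t ht, mul_one, Fintype.card_fin] at hbessel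
      exact mul_le_mul_of_nonneg_left hbessel hE.le
  have hT₀ : T ∈ Icc 0 T := ⟨hT.le, le_rfl⟩
  calc ∑ k, ‖ψk k T - ψ T‖ ^ 2
      = 2 * (∑ k, ⟪ψk k 0, ψ 0⟫_ℂ - ∑ k, ⟪ψk k T, ψ T⟫_ℂ).re := by
        simp only [hψ0, hψk0, inner_self_eq_norm_sq_to_K, hwI, re_sum, sub_re, Finset.mul_sum,
          ← Finset.sum_sub_distrib, @norm_sub_sq ℂ, hnψ T hT₀, hnψk _ T hT₀]
        refine Finset.sum_congr rfl fun k _ => ?_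
        simp only [RCLike.re_to_complex, RCLike.ofReal_one, one_pow, one_re]
        ring
    _ ≤ 2 * ‖∑ k, ⟪ψk k T, ψ T⟫_ℂ - ∑ k, ⟪ψk k 0, ψ 0⟫_ℂ‖ := by
        rw [norm_sub_rev]; gcongr; exact re_le_norm _
    _ ≤ 2 * E * √Nt * T := by linarith

/-- under the driven Schrödinger dynamics, the accumulated deviation satisfies
`∑_k ‖ψ_k(T̃) − ψ(T̃)‖² ≤ 2E√Ñ T̃`. -/
theorem upper_bound_sum_dist_sq_of_schrodinger
    (Nt ℓ : ℕ) (hNt : 1 ≤ Nt) (hℓ : 1 ≤ ℓ)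
    (w : Fin Nt × Fin ℓ → EuclideanSpace ℂ (Fin (Nt * ℓ)))
    (hw : Orthonormal ℂ w)
    (hspan : Submodule.span ℂ (Set.range w) = ⊤)
    (L : Fin Nt → Submodule ℂ (EuclideanSpace ℂ (Fin (Nt * ℓ))))
    (hL : ∀ k, L k = Submodule.span ℂ (Set.range fun i : Fin ℓ => w (k, i)))
    (P : Fin Nt → (EuclideanSpace ℂ (Fin (Nt * ℓ)) →L[ℂ] EuclideanSpace ℂ (Fin (Nt * ℓ))))
    (hP : ∀ k, P k = (L k).subtypeL.comp (L k).orthogonalProjectionOnto)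
    (E T : ℝ) (hE : 0 < E) (hT : 0 < T)
    (HD : ℝ → (EuclideanSpace ℂ (Fin (Nt * ℓ)) →L[ℂ] EuclideanSpace ℂ (Fin (Nt * ℓ))))
    (hHDcont : ContinuousOn HD (Set.Icc 0 T))
    (hHDsa : ∀ t ∈ Set.Icc (0 : ℝ) T, IsSelfAdjoint (HD t))
    (wI : EuclideanSpace ℂ (Fin (Nt * ℓ))) (hwI : ‖wI‖ = 1)
    (ψ : ℝ → EuclideanSpace ℂ (Fin (Nt * ℓ)))
    (ψk : Fin Nt → ℝ → EuclideanSpace ℂ (Fin (Nt * ℓ)))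
    (hψ0 : ψ 0 = wI) (hψk0 : ∀ k, ψk k 0 = wI)
    (hψ : ∀ t ∈ Set.Icc (0 : ℝ) T,
      HasDerivAt ψ ((-Complex.I) • HD t (ψ t)) t)
    (hψk : ∀ k, ∀ t ∈ Set.Icc (0 : ℝ) T,
      HasDerivAt (ψk k) ((-Complex.I) • (((E : ℂ) • P k + HD t) (ψk k t))) t) :
    ∑ k : Fin Nt, ‖ψk k T - ψ T‖ ^ 2 ≤ 2 * E * Real.sqrt Nt * T :=
  upper_bound_sum_dist_sq_of_schrodinger_general Nt ℓ w hw L hL P hP E T hE hT HD hHDsa wI hwI ψ ψk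
    hψ0 hψk0 hψ hψk
end

section
/- Suppose ψ, ψ_1, …, ψ_Ñ : [0, T̃] → ℋ are differentiable curves satisfying i dψ/dt = H_D(t) ψ(t) and i dψ_k/dt = (E P_k + H_D(t)) ψ_k(t) for each k, with common initial condition ψ(0) = ψ_k(0) = w_I for a unit vector w_I ∈ ℋ, and suppose additionally that each terminal state lies in its target subspace: ψ_k(T̃) ∈ L_k for every k = 1, …, Ñ. Then T̃ ≥ (1 − Ñ^{−1/2}) √Ñ / E. In particular, any such driven Hamiltonian search of ℓ marked objects among N requires time at least of order (1/E)√(N/ℓ). -/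
/-!
The overlaps `g k t = ⟪ψ t, ψk k t⟫` all start at `1`. Both curves feel the same `H_D`, so only
the extra term `E P_k` moves `g k`, at speed `E ‖⟪P_k ψ, ψk k⟫‖ ≤ E ‖P_k ψ‖`; by Bessel's
inequality over the orthogonal blocks and Cauchy–Schwarz, `∑ k, ‖P_k ψ‖ ≤ √Ñ`, so the vector
`(g k)` moves in `ℓ¹` at speed at most `E √Ñ`. At the end `ψk k T̃ ∈ L_k` gives the same bound
`∑ k, ‖g k T̃‖ ≤ √Ñ`, so the `ℓ¹` distance travelled, at least `Ñ - √Ñ`, is at most `E √Ñ T̃`.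
-/

open Set Submodule
open scoped InnerProductSpace

section Projection

variable {𝕜 E ι : Type*} [RCLike 𝕜] [NormedAddCommGroup E] [InnerProductSpace 𝕜 E]

theorem Orthonormal.starProjection_span_apply [Fintype ι] {v : ι → E} (hv : Orthonormal 𝕜 v)
    [(span 𝕜 (range v)).HasOrthogonalProjection] (x : E) :
    (span 𝕜 (range v)).starProjection x = ∑ i, ⟪v i, x⟫_𝕜 • v i := by
  refine eq_starProjection_of_mem_of_inner_eq_zero
    (sum_mem fun i _ => smul_mem _ _ (subset_span (mem_range_self i))) fun u hu => ?_
  induction hu using span_induction with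
  | mem u hu =>
    obtain ⟨j, rfl⟩ := hu
    rw [inner_sub_left, hv.inner_left_fintype, inner_conj_symm, sub_self]
  | zero => exact inner_zero_right _
  | add u₁ u₂ _ _ h₁ h₂ => rw [inner_add_right, h₁, h₂, add_zero]
  | smul c u _ h => rw [inner_smul_right, h, mul_zero]

theorem Orthonormal.norm_starProjection_span_sq [Fintype ι] {v : ι → E} (hv : Orthonormal 𝕜 v)
    [(span 𝕜 (range v)).HasOrthogonalProjection] (x : E) :
    ‖(span 𝕜 (range v)).starProjection x‖ ^ 2 = ∑ i, ‖⟪v i, x⟫_𝕜‖ ^ 2 := by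
  rw [hv.starProjection_span_apply, ← RCLike.ofReal_inj (K := 𝕜), RCLike.ofReal_pow,
    ← inner_self_eq_norm_sq_to_K, hv.inner_sum, RCLike.ofReal_sum]
  refine Finset.sum_congr rfl fun i _ => ?_
  rw [← inner_conj_symm, RCLike.conj_mul, RCLike.ofReal_pow]

theorem Orthonormal.sum_norm_starProjection_sq_le {κ : Type*} [Fintype ι] [Fintype κ]
    {w : κ × ι → E} (hw : Orthonormal 𝕜 w) (K : κ → Submodule 𝕜 E)
    [∀ k, (K k).HasOrthogonalProjection] (hK : ∀ k, K k = span 𝕜 (range fun i => w (k, i)))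
    (x : E) : ∑ k, ‖(K k).starProjection x‖ ^ 2 ≤ ‖x‖ ^ 2 := by
  obtain rfl := funext hK
  have hblock (k : κ) : Orthonormal 𝕜 fun i => w (k, i) :=
    hw.comp _ fun i j h => (Prod.ext_iff.1 h).2
  simp_rw [fun k => (hblock k).norm_starProjection_span_sq x, ← Fintype.sum_prod_type']
  exact hw.sum_inner_products_le x

theorem Orthonormal.sum_norm_starProjection_le {κ : Type*} [Fintype ι] [Fintype κ]
    {w : κ × ι → E} (hw : Orthonormal 𝕜 w) (K : κ → Submodule 𝕜 E)
    [∀ k, (K k).HasOrthogonalProjection] (hK : ∀ k, K k = span 𝕜 (range fun i => w (k, i)))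
    (x : E) : ∑ k, ‖(K k).starProjection x‖ ≤ √(Fintype.card κ) * ‖x‖ := by
  rw [← Real.sqrt_sq (norm_nonneg x), ← Real.sqrt_mul (Nat.cast_nonneg _)]
  refine Real.le_sqrt_of_sq_le ((sq_sum_le_card_mul_sum_sq ..).trans ?_)
  simpa using mul_le_mul_of_nonneg_left (hw.sum_norm_starProjection_sq_le K hK x)
    (Nat.cast_nonneg (Fintype.card κ))

theorem norm_inner_starProjection_right_le (K : Submodule 𝕜 E) [K.HasOrthogonalProjection]
    (x y : E) : ‖⟪x, K.starProjection y⟫_𝕜‖ ≤ ‖K.starProjection x‖ * ‖y‖ := by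
  rw [← inner_starProjection_left_eq_right]
  exact norm_inner_le_norm _ _

theorem Orthonormal.sum_norm_inner_starProjection_le {κ : Type*} [Fintype ι] [Fintype κ]
    {w : κ × ι → E} (hw : Orthonormal 𝕜 w) (K : κ → Submodule 𝕜 E)
    [∀ k, (K k).HasOrthogonalProjection] (hK : ∀ k, K k = span 𝕜 (range fun i => w (k, i)))
    (x : E) {y : κ → E} (hy : ∀ k, ‖y k‖ ≤ 1) :
    ∑ k, ‖⟪x, (K k).starProjection (y k)⟫_𝕜‖ ≤ √(Fintype.card κ) * ‖x‖ := calc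
  _ ≤ ∑ k, ‖(K k).starProjection x‖ := by
    gcongr with k
    exact (norm_inner_starProjection_right_le (K k) x (y k)).trans
      (mul_le_of_le_one_right (norm_nonneg _) (hy k))
  _ ≤ √(Fintype.card κ) * ‖x‖ := hw.sum_norm_starProjection_le K hK x

end Projection

section Schrodinger

variable {F : Type*} [NormedAddCommGroup F] [InnerProductSpace ℂ F] [CompleteSpace F]

theorem hasDerivAt_inner_of_schrodinger_s10 {ψ χ : ℝ → F} {H V : F →L[ℂ] F} {t : ℝ}
    (hH : IsSelfAdjoint H) (hψ : HasDerivAt ψ (-Complex.I • H (ψ t)) t)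
    (hχ : HasDerivAt χ (-Complex.I • (V + H) (χ t)) t) :
    HasDerivAt (fun s => ⟪ψ s, χ s⟫_ℂ) (-Complex.I * ⟪ψ t, V (χ t)⟫_ℂ) t := by
  have hsymm : ⟪H (ψ t), χ t⟫_ℂ = ⟪ψ t, H (χ t)⟫_ℂ := hH.isSymmetric _ _
  refine (hψ.inner ℂ hχ).congr_deriv ?_
  rw [inner_smul_right, inner_smul_left, add_apply, inner_add_right, hsymm,
    Complex.conj_neg_I]
  ring

theorem inner_eq_of_schrodinger {ψ χ : ℝ → F} {H : ℝ → F →L[ℂ] F} {a b : ℝ}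
    (hH : ∀ t ∈ Icc a b, IsSelfAdjoint (H t))
    (hψ : ∀ t ∈ Icc a b, HasDerivAt ψ (-Complex.I • H t (ψ t)) t)
    (hχ : ∀ t ∈ Icc a b, HasDerivAt χ (-Complex.I • H t (χ t)) t) :
    ∀ t ∈ Icc a b, ⟪ψ t, χ t⟫_ℂ = ⟪ψ a, χ a⟫_ℂ := by
  have hderiv (t) (ht : t ∈ Icc a b) : HasDerivAt (fun s => ⟪ψ s, χ s⟫_ℂ) 0 t := by
    simpa using hasDerivAt_inner_of_schrodinger_s10 (V := 0) (hH t ht) (hψ t ht)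
      (by simpa using hχ t ht)
  exact constant_of_has_deriv_right_zero
    (fun t ht => (hderiv t ht).continuousAt.continuousWithinAt)
    fun t ht => (hderiv t (Ico_subset_Icc_self ht)).hasDerivWithinAt

theorem norm_eq_of_schrodinger {φ : ℝ → F} {H : ℝ → F →L[ℂ] F} {a b : ℝ}
    (hH : ∀ t ∈ Icc a b, IsSelfAdjoint (H t))
    (hφ : ∀ t ∈ Icc a b, HasDerivAt φ (-Complex.I • H t (φ t)) t) :
    ∀ t ∈ Icc a b, ‖φ t‖ = ‖φ a‖ := by
  intro t ht
  have h := inner_eq_of_schrodinger hH hφ hφ t ht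
  rw [inner_self_eq_norm_sq_to_K, inner_self_eq_norm_sq_to_K] at h
  exact (sq_eq_sq₀ (norm_nonneg _) (norm_nonneg _)).1 (by exact_mod_cast h)

end Schrodinger

theorem sum_norm_sub_le_of_sum_norm_deriv_le {ι G : Type*} [Fintype ι] [NormedAddCommGroup G]
    [NormedSpace ℝ G] {g g' : ι → ℝ → G} {C a b : ℝ} (hab : a ≤ b)
    (hg : ∀ i, ∀ t ∈ Icc a b, HasDerivAt (g i) (g' i t) t)
    (hC : ∀ t ∈ Ico a b, ∑ i, ‖g' i t‖ ≤ C) :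
    ∑ i, ‖g i b - g i a‖ ≤ C * (b - a) := by
  let toL1 : (ι → G) →L[ℝ] PiLp 1 (fun _ : ι => G) :=
    (PiLp.continuousLinearEquiv 1 ℝ (fun _ : ι => G)).symm.toContinuousLinearMap
  have hderiv (t) (ht : t ∈ Icc a b) :
      HasDerivWithinAt (fun s => toL1 fun i => g i s) (toL1 fun i => g' i t) (Icc a b) t :=
    (toL1.hasFDerivAt.comp_hasDerivAt t (hasDerivAt_pi.2 fun i => hg i t ht)).hasDerivWithinAt
  simpa [PiLp.norm_eq_of_L1, toL1] using norm_image_sub_le_of_norm_deriv_le_segment' hderiv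
    (fun t ht => by simpa [PiLp.norm_eq_of_L1, toL1] using hC t ht) b (right_mem_Icc.2 hab)

theorem card_sub_sum_norm_le_sum_norm_sub_one {ι R : Type*} [Fintype ι] [SeminormedRing R]
    [NormOneClass R] (z : ι → R) : (Fintype.card ι : ℝ) - ∑ k, ‖z k‖ ≤ ∑ k, ‖z k - 1‖ := by
  rw [← Finset.card_univ, ← nsmul_one, ← Finset.sum_const, ← Finset.sum_sub_distrib]
  gcongr with k
  simpa [norm_sub_rev] using norm_sub_norm_le (1 : R) (z k)

theorem one_sub_inv_sqrt_mul_sqrt_div_le {n : ℕ} {E T : ℝ} (hE : 0 < E) (hT : 0 ≤ T)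
    (h : (n : ℝ) - √n ≤ E * √n * T) : (1 - (√n)⁻¹) * √n / E ≤ T := by
  rw [div_le_iff₀ hE]
  rcases (Real.sqrt_nonneg (n : ℝ)).eq_or_lt with hs | hs
  · simpa [← hs] using mul_nonneg hT hE.le
  · have hsq : √(n : ℝ) ^ 2 = n := Real.sq_sqrt (Nat.cast_nonneg _)
    rw [sub_mul, inv_mul_cancel₀ hs.ne']
    nlinarith

theorem time_lower_bound_for_driven_hamiltonian_search_general
    (Nt ℓ : ℕ)
    (w : Fin Nt × Fin ℓ → EuclideanSpace ℂ (Fin (Nt * ℓ)))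
    (hw : Orthonormal ℂ w)
    (L : Fin Nt → Submodule ℂ (EuclideanSpace ℂ (Fin (Nt * ℓ))))
    (hL : ∀ k, L k = Submodule.span ℂ (Set.range fun i : Fin ℓ => w (k, i)))
    (P : Fin Nt → (EuclideanSpace ℂ (Fin (Nt * ℓ)) →L[ℂ] EuclideanSpace ℂ (Fin (Nt * ℓ))))
    (hP : ∀ k, P k = (L k).subtypeL.comp ((L k).orthogonalProjectionOnto))
    (E T : ℝ) (hE : 0 < E) (hT : 0 < T)
    (HD : ℝ → (EuclideanSpace ℂ (Fin (Nt * ℓ)) →L[ℂ] EuclideanSpace ℂ (Fin (Nt * ℓ))))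
    (hHDsa : ∀ t ∈ Set.Icc (0 : ℝ) T, IsSelfAdjoint (HD t))
    (wI : EuclideanSpace ℂ (Fin (Nt * ℓ))) (hwI : ‖wI‖ = 1)
    (ψ : ℝ → EuclideanSpace ℂ (Fin (Nt * ℓ)))
    (ψk : Fin Nt → ℝ → EuclideanSpace ℂ (Fin (Nt * ℓ)))
    (hψ0 : ψ 0 = wI) (hψk0 : ∀ k, ψk k 0 = wI)
    (hψ : ∀ t ∈ Set.Icc (0 : ℝ) T,
      HasDerivAt ψ ((-Complex.I) • HD t (ψ t)) t)
    (hψk : ∀ k, ∀ t ∈ Set.Icc (0 : ℝ) T,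
      HasDerivAt (ψk k) ((-Complex.I) • (((E : ℂ) • P k + HD t) (ψk k t))) t)
    (hterm : ∀ k, ψk k T ∈ L k) :
    (1 - (Real.sqrt Nt)⁻¹) * Real.sqrt Nt / E ≤ T := by
  obtain rfl : P = fun k => (L k).starProjection := funext hP
  have hT0 : T ∈ Icc 0 T := right_mem_Icc.2 hT.le
  have hψ1 (t) (ht : t ∈ Icc 0 T) : ‖ψ t‖ = 1 := by
    rw [norm_eq_of_schrodinger hHDsa hψ t ht, hψ0, hwI]
  have hψk1 (k) (t) (ht : t ∈ Icc 0 T) : ‖ψk k t‖ = 1 := by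
    refine (norm_eq_of_schrodinger (fun t ht => ?_) (hψk k) t ht).trans (by rw [hψk0, hwI])
    exact (IsSelfAdjoint.smul (Complex.conj_ofReal E) (isSelfAdjoint_starProjection _)).add
      (hHDsa t ht)
  have hoverlap (t) (ht : t ∈ Icc 0 T) :
      ∑ k, ‖⟪ψ t, (L k).starProjection (ψk k t)⟫_ℂ‖ ≤ √Nt := by
    simpa [hψ1 t ht] using hw.sum_norm_inner_starProjection_le L hL (ψ t)
      (fun k => (hψk1 k t ht).le)
  have hmoved := sum_norm_sub_le_of_sum_norm_deriv_le hT.le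
    (fun k t ht => hasDerivAt_inner_of_schrodinger_s10 (hHDsa t ht) (hψ t ht) (hψk k t ht))
    fun t ht => by
      simpa [abs_of_pos hE, ← Finset.mul_sum] using
        mul_le_mul_of_nonneg_left (hoverlap t (Ico_subset_Icc_self ht)) hE.le
  have hfinal : ∑ k, ‖⟪ψ T, ψk k T⟫_ℂ‖ ≤ √Nt := by
    simpa only [starProjection_eq_self_iff.2 (hterm _)] using hoverlap T hT0
  have hinit (k) : ⟪ψ 0, ψk k 0⟫_ℂ = 1 := by
    rw [hψ0, hψk0, inner_self_eq_norm_sq_to_K, hwI]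
    norm_num
  refine one_sub_inv_sqrt_mul_sqrt_div_le hE hT.le ?_
  have hdrop := card_sub_sum_norm_le_sum_norm_sub_one fun k => ⟪ψ T, ψk k T⟫_ℂ
  simp only [hinit, Fintype.card_fin, sub_zero] at hdrop hmoved
  linarith

/-- if additionally each terminal state lies in its target subspace
(`ψ_k(T̃) ∈ L_k`), then `T̃ ≥ (1 − Ñ^{−1/2}) √Ñ / E`: the driven Hamiltonian search needs
time of order `(1/E)√(N/ℓ)`. -/
theorem time_lower_bound_for_driven_hamiltonian_search
    (Nt ℓ : ℕ) (hNt : 2 ≤ Nt) (hℓ : 1 ≤ ℓ)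
    (w : Fin Nt × Fin ℓ → EuclideanSpace ℂ (Fin (Nt * ℓ)))
    (hw : Orthonormal ℂ w)
    (hspan : Submodule.span ℂ (Set.range w) = ⊤)
    (L : Fin Nt → Submodule ℂ (EuclideanSpace ℂ (Fin (Nt * ℓ))))
    (hL : ∀ k, L k = Submodule.span ℂ (Set.range fun i : Fin ℓ => w (k, i)))
    (P : Fin Nt → (EuclideanSpace ℂ (Fin (Nt * ℓ)) →L[ℂ] EuclideanSpace ℂ (Fin (Nt * ℓ))))
    (hP : ∀ k, P k = (L k).subtypeL.comp ((L k).orthogonalProjectionOnto))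
    (E T : ℝ) (hE : 0 < E) (hT : 0 < T)
    (HD : ℝ → (EuclideanSpace ℂ (Fin (Nt * ℓ)) →L[ℂ] EuclideanSpace ℂ (Fin (Nt * ℓ))))
    (hHDcont : ContinuousOn HD (Set.Icc 0 T))
    (hHDsa : ∀ t ∈ Set.Icc (0 : ℝ) T, IsSelfAdjoint (HD t))
    (wI : EuclideanSpace ℂ (Fin (Nt * ℓ))) (hwI : ‖wI‖ = 1)
    (ψ : ℝ → EuclideanSpace ℂ (Fin (Nt * ℓ)))
    (ψk : Fin Nt → ℝ → EuclideanSpace ℂ (Fin (Nt * ℓ)))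
    (hψ0 : ψ 0 = wI) (hψk0 : ∀ k, ψk k 0 = wI)
    (hψ : ∀ t ∈ Set.Icc (0 : ℝ) T,
      HasDerivAt ψ ((-Complex.I) • HD t (ψ t)) t)
    (hψk : ∀ k, ∀ t ∈ Set.Icc (0 : ℝ) T,
      HasDerivAt (ψk k) ((-Complex.I) • (((E : ℂ) • P k + HD t) (ψk k t))) t)
    (hterm : ∀ k, ψk k T ∈ L k) :
    (1 - (Real.sqrt Nt)⁻¹) * Real.sqrt Nt / E ≤ T :=
  time_lower_bound_for_driven_hamiltonian_search_general Nt ℓ w hw L hL P hP E T hE hT HD hHDsa wI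
    hwI ψ ψk hψ0 hψk0 hψ hψk hterm
end

section
/- The two-dimensional subspace V = {a ∑_{i=1}^{ℓ} w_i + b r : a, b ∈ ℂ} contains both r and s and is invariant under the Grover operator: U(V) = V. -/
open scoped BigOperators
noncomputable section

local notation "⟪" x ", " y "⟫" => @inner ℂ _ _ x y

/-!
Both reflections `I_L = I - 2 P_L` and `I_s = I - 2 |s⟩⟨s|` are involutions, so each maps a
subspace it sends into itself onto itself. `I_s` preserves `V` because `s ∈ V`, and `I_L`
preserves `V` because it negates `∑_{i ≤ ℓ} w_i` and fixes `r`, which is orthogonal to every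
`w_i` with `i ≤ ℓ`. Hence `U = -I_s I_L` maps `V` onto `V`.
-/

section Reflection

variable {𝕜 E ι : Type*} [RCLike 𝕜] [NormedAddCommGroup E] [InnerProductSpace 𝕜 E]
  {v : ι → E} {S : Finset ι} {f : E → E}

theorem Orthonormal.inner_right_sum_self (hv : Orthonormal 𝕜 v) {i : ι} (hi : i ∈ S) :
    inner 𝕜 (v i) (∑ j ∈ S, v j) = 1 := by
  simpa using hv.inner_right_sum (fun _ => (1 : 𝕜)) hi

theorem Orthonormal.inner_apply_of_eq_sub_two_smul_sum (hv : Orthonormal 𝕜 v)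
    (hf : ∀ u, f u = u - (2 : 𝕜) • ∑ j ∈ S, inner 𝕜 (v j) u • v j) {i : ι} (hi : i ∈ S) (u : E) :
    inner 𝕜 (v i) (f u) = -inner 𝕜 (v i) u := by
  rw [hf, inner_sub_right, inner_smul_right, hv.inner_right_sum _ hi]
  ring

theorem Orthonormal.involutive_of_eq_sub_two_smul_sum (hv : Orthonormal 𝕜 v)
    (hf : ∀ u, f u = u - (2 : 𝕜) • ∑ j ∈ S, inner 𝕜 (v j) u • v j) : Function.Involutive f := by
  intro u
  rw [hf (f u), Finset.sum_congr rfl fun j hj => by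
    rw [hv.inner_apply_of_eq_sub_two_smul_sum hf hj, neg_smul], Finset.sum_neg_distrib, hf u]
  module

theorem Orthonormal.apply_sum_of_eq_sub_two_smul_sum (hv : Orthonormal 𝕜 v)
    (hf : ∀ u, f u = u - (2 : 𝕜) • ∑ j ∈ S, inner 𝕜 (v j) u • v j) :
    f (∑ j ∈ S, v j) = -∑ j ∈ S, v j := by
  have h : ∑ j ∈ S, inner 𝕜 (v j) (∑ i ∈ S, v i) • v j = ∑ j ∈ S, v j :=
    Finset.sum_congr rfl fun j hj => by rw [hv.inner_right_sum_self hj, one_smul]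
  rw [hf, h]
  module

theorem apply_eq_self_of_eq_sub_two_smul_sum
    (hf : ∀ u, f u = u - (2 : 𝕜) • ∑ j ∈ S, inner 𝕜 (v j) u • v j) {u : E}
    (hu : ∀ j ∈ S, inner 𝕜 (v j) u = 0) : f u = u := by
  rw [hf, Finset.sum_eq_zero fun j hj => by rw [hu j hj, zero_smul], smul_zero, sub_zero]

theorem Orthonormal.inner_self_inv_sqrt_smul_sum {n : ℕ} {v : Fin n → E} (hv : Orthonormal 𝕜 v)
    (hn : 0 < n) :
    inner 𝕜 (((Real.sqrt n : 𝕜))⁻¹ • ∑ j, v j) (((Real.sqrt n : 𝕜))⁻¹ • ∑ j, v j) = 1 := by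
  have hsum : inner 𝕜 (∑ j, v j) (∑ j, v j) = n := by
    rw [sum_inner, Finset.sum_congr rfl fun j _ => hv.inner_right_sum_self (Finset.mem_univ j)]
    simp
  have hsqrt : (Real.sqrt n : 𝕜) * Real.sqrt n = n := by
    rw [← RCLike.ofReal_mul, Real.mul_self_sqrt n.cast_nonneg, RCLike.ofReal_natCast]
  have hn' : (n : 𝕜) ≠ 0 := by exact_mod_cast hn.ne'
  rw [inner_smul_left, inner_smul_right, hsum, map_inv₀, RCLike.conj_ofReal, ← mul_assoc,
    ← mul_inv, hsqrt, inv_mul_cancel₀ hn']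

theorem involutive_of_eq_sub_two_smul_inner {s : E} (hs : inner 𝕜 s s = 1)
    (hf : ∀ u, f u = u - (2 : 𝕜) • inner 𝕜 s u • s) : Function.Involutive f := by
  intro u
  rw [hf (f u), hf u, inner_sub_right, inner_smul_right, inner_smul_right, hs]
  module

theorem Submodule.map_eq_self_of_involutive {R M : Type*} [Semiring R] [AddCommMonoid M]
    [Module R M] {f : M →ₗ[R] M} (hf : Function.Involutive f) {V : Submodule R M}
    (hV : V.map f ≤ V) : V.map f = V :=
  le_antisymm hV fun x hx => ⟨f x, hV ⟨x, hx, rfl⟩, hf x⟩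

theorem Submodule.map_eq_self_of_eq_sub_two_smul_inner {f : E →ₗ[𝕜] E} {s : E}
    (hs : inner 𝕜 s s = 1) (hf : ∀ u, f u = u - (2 : 𝕜) • inner 𝕜 s u • s)
    {V : Submodule 𝕜 E} (hsV : s ∈ V) : V.map f = V := by
  refine map_eq_self_of_involutive (involutive_of_eq_sub_two_smul_inner hs hf) ?_
  rintro _ ⟨x, hx, rfl⟩
  rw [hf]
  exact sub_mem hx (smul_mem _ _ (smul_mem _ _ hsV))

theorem Orthonormal.map_span_sum_pair_eq_self (hv : Orthonormal 𝕜 v) {f : E →ₗ[𝕜] E}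
    (hf : ∀ u, f u = u - (2 : 𝕜) • ∑ j ∈ S, inner 𝕜 (v j) u • v j) {y : E}
    (hy : ∀ j ∈ S, inner 𝕜 (v j) y = 0) :
    (Submodule.span 𝕜 {∑ j ∈ S, v j, y}).map f = Submodule.span 𝕜 {∑ j ∈ S, v j, y} := by
  refine Submodule.map_eq_self_of_involutive (hv.involutive_of_eq_sub_two_smul_sum hf) ?_
  rw [Submodule.map_span_le]
  rintro _ (rfl | rfl)
  · rw [hv.apply_sum_of_eq_sub_two_smul_sum hf]
    exact neg_mem (Submodule.subset_span (by simp))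
  · rw [apply_eq_self_of_eq_sub_two_smul_sum hf hy]
    exact Submodule.subset_span (by simp)

end Reflection

theorem two_dimensional_invariant_subspace_for_grover_operator_general
    (N ℓ : ℕ) (hℓN : ℓ < N)
    (w : Fin N → EuclideanSpace ℂ (Fin N)) (hw : Orthonormal ℂ w)
    (s : EuclideanSpace ℂ (Fin N))
    (hs : s = ((Real.sqrt N : ℂ))⁻¹ • ∑ j : Fin N, w j)
    (IL : EuclideanSpace ℂ (Fin N) →L[ℂ] EuclideanSpace ℂ (Fin N))
    (hIL : ∀ u, IL u = u - (2 : ℂ) •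
      ∑ j ∈ Finset.univ.filter (fun j : Fin N => (j : ℕ) < ℓ), ⟪w j, u⟫ • w j)
    (Is : EuclideanSpace ℂ (Fin N) →L[ℂ] EuclideanSpace ℂ (Fin N))
    (hIs : ∀ u, Is u = u - (2 : ℂ) • ⟪s, u⟫ • s)
    (U : EuclideanSpace ℂ (Fin N) →L[ℂ] EuclideanSpace ℂ (Fin N))
    (hU : ∀ u, U u = -Is (IL u))
    (r : EuclideanSpace ℂ (Fin N))
    (hr : r = ((Real.sqrt (1 - (ℓ : ℝ) / N) : ℂ))⁻¹ •
      (s - ((Real.sqrt N : ℂ))⁻¹ •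
        ∑ j ∈ Finset.univ.filter (fun j : Fin N => (j : ℕ) < ℓ), w j))
    (wsum : EuclideanSpace ℂ (Fin N))
    (hwsum : wsum = ∑ j ∈ Finset.univ.filter (fun j : Fin N => (j : ℕ) < ℓ), w j)
    (V : Submodule ℂ (EuclideanSpace ℂ (Fin N)))
    (hV : V = Submodule.span ℂ {wsum, r}) :
    r ∈ V ∧ s ∈ V ∧
    Submodule.map (U : EuclideanSpace ℂ (Fin N) →ₗ[ℂ] EuclideanSpace ℂ (Fin N)) V = V := by
  set S := Finset.univ.filter (fun j : Fin N => (j : ℕ) < ℓ)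
  set a : ℂ := ((Real.sqrt N : ℂ))⁻¹
  set c : ℂ := (Real.sqrt (1 - (ℓ : ℝ) / N) : ℂ)
  have hN : 0 < N := (Nat.zero_le ℓ).trans_lt hℓN
  have hc : c ≠ 0 := by
    have : (ℓ : ℝ) / N < 1 := (div_lt_one (by exact_mod_cast hN)).mpr (by exact_mod_cast hℓN)
    simpa [c] using (Real.sqrt_pos.mpr (sub_pos.mpr this)).ne'
  have hws : ∀ j, ⟪w j, s⟫ = a := fun j => by
    rw [hs, inner_smul_right, hw.inner_right_sum_self (Finset.mem_univ j), mul_one]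
  have hwr : ∀ j ∈ S, ⟪w j, r⟫ = 0 := fun j hj => by
    rw [hr, inner_smul_right, inner_sub_right, inner_smul_right, hws, hw.inner_right_sum_self hj]
    ring
  have hsr : s = c • r + a • wsum := by
    rw [hr, ← hwsum, smul_smul, mul_inv_cancel₀ hc, one_smul]
    module
  have hrV : r ∈ V := hV ▸ Submodule.subset_span (by simp)
  have hsV : s ∈ V := by
    rw [hsr]
    exact add_mem (V.smul_mem _ hrV) (V.smul_mem _ (hV ▸ Submodule.subset_span (by simp)))
  have hIL_map : V.map IL.toLinearMap = V := by
    rw [hV, hwsum]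
    exact hw.map_span_sum_pair_eq_self hIL hwr
  have hIs_map : V.map Is.toLinearMap = V :=
    Submodule.map_eq_self_of_eq_sub_two_smul_inner
      (hs ▸ hw.inner_self_inv_sqrt_smul_sum hN) hIs hsV
  have hU_eq : U.toLinearMap = -(Is.toLinearMap ∘ₗ IL.toLinearMap) := LinearMap.ext hU
  refine ⟨hrV, hsV, ?_⟩
  rw [hU_eq, Submodule.map_neg, Submodule.map_comp, hIL_map, hIs_map]

/-- the two-dimensional subspace `V = {a ∑ w_i + b r}` contains `r` and `s`
and is invariant under the Grover operator: `U(V) = V`. -/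
theorem two_dimensional_invariant_subspace_for_grover_operator
    (N ℓ : ℕ) (hN : 2 ≤ N) (hℓ1 : 1 ≤ ℓ) (hℓN : ℓ < N)
    (w : Fin N → EuclideanSpace ℂ (Fin N)) (hw : Orthonormal ℂ w)
    (s : EuclideanSpace ℂ (Fin N))
    (hs : s = ((Real.sqrt N : ℂ))⁻¹ • ∑ j : Fin N, w j)
    (IL : EuclideanSpace ℂ (Fin N) →L[ℂ] EuclideanSpace ℂ (Fin N))
    (hIL : ∀ u, IL u = u - (2 : ℂ) •
      ∑ j ∈ Finset.univ.filter (fun j : Fin N => (j : ℕ) < ℓ), ⟪w j, u⟫ • w j)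
    (Is : EuclideanSpace ℂ (Fin N) →L[ℂ] EuclideanSpace ℂ (Fin N))
    (hIs : ∀ u, Is u = u - (2 : ℂ) • ⟪s, u⟫ • s)
    (U : EuclideanSpace ℂ (Fin N) →L[ℂ] EuclideanSpace ℂ (Fin N))
    (hU : ∀ u, U u = -Is (IL u))
    (r : EuclideanSpace ℂ (Fin N))
    (hr : r = ((Real.sqrt (1 - (ℓ : ℝ) / N) : ℂ))⁻¹ •
      (s - ((Real.sqrt N : ℂ))⁻¹ •
        ∑ j ∈ Finset.univ.filter (fun j : Fin N => (j : ℕ) < ℓ), w j))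
    (wsum : EuclideanSpace ℂ (Fin N))
    (hwsum : wsum = ∑ j ∈ Finset.univ.filter (fun j : Fin N => (j : ℕ) < ℓ), w j)
    (V : Submodule ℂ (EuclideanSpace ℂ (Fin N)))
    (hV : V = Submodule.span ℂ {wsum, r}) :
    r ∈ V ∧ s ∈ V ∧
    Submodule.map (U : EuclideanSpace ℂ (Fin N) →ₗ[ℂ] EuclideanSpace ℂ (Fin N)) V = V :=
  two_dimensional_invariant_subspace_for_grover_operator_general N ℓ hℓN w hw s hs IL hIL Is hIs U
    hU r hr wsum hwsum V hV
end
end
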